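/- arXiv:2203.05093 — 5 statements merged into one kernel-verified Lean document; each statement's English description precedes it below -/
import Mathlib

section
/- For m, n ∈ (-1,1)^n, the Bregman divergence D_{-h}(m,n) := -h(m) + h(n) + ⟨∇h(n), m - n⟩ (where h(m) = Σ_i h(m_i) is the coordinate-wise binary entropy) satisfies D_{-h}(m,n) ≥ ‖m - n‖₂²/2. -/
open Real Set Finset

/-- The binary entropy function. -/
noncomputable def skEntropy (x : ℝ) : ℝ :=
  -((1 + x) / 2) * Real.log ((1 + x) / 2) - ((1 - x) / 2) * Real.log ((1 - x) / 2)

/-- Coordinate-wise binary entropy of a vector. -/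
noncomputable def skEntropyVec {d : ℕ} (m : Fin d → ℝ) : ℝ := ∑ i, skEntropy (m i)

/-- `atanh`, the inverse hyperbolic tangent. -/
noncomputable def skAtanh (x : ℝ) : ℝ := (1 / 2) * Real.log ((1 + x) / (1 - x))

/-- The Bregman divergence `D_{-h}(m,n) = -h(m) + h(n) + ⟨∇h(n), m-n⟩`, where
`∇h(n)_i = -atanh(n_i)`. -/
noncomputable def bregman {d : ℕ} (m n : Fin d → ℝ) : ℝ :=
  -skEntropyVec m + skEntropyVec n + ∑ i, (-skAtanh (n i)) * (m i - n i)

lemma hasDerivAt_skEntropy {x : ℝ} (hx : x ∈ Ioo (-1 : ℝ) 1) :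
    HasDerivAt skEntropy (-skAtanh x) x := by
  obtain ⟨h1, h2⟩ := hx
  have hu : (0:ℝ) < (1 + x) / 2 := by linarith
  have hv : (0:ℝ) < (1 - x) / 2 := by linarith
  have hA : HasDerivAt (fun t : ℝ => (1 + t) / 2) (1 / 2) x := by
    simpa using ((hasDerivAt_id x).const_add 1).div_const 2
  have hB : HasDerivAt (fun t : ℝ => (1 - t) / 2) (-1 / 2) x := by
    simpa [neg_div] using ((hasDerivAt_id x).const_sub 1).div_const 2
  have hAu : HasDerivAt (fun t : ℝ => Real.negMulLog ((1 + t) / 2))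
      ((-Real.log ((1 + x) / 2) - 1) * (1 / 2)) x :=
    by have := (Real.hasDerivAt_negMulLog hu.ne').comp x hA; exact this
  have hBv : HasDerivAt (fun t : ℝ => Real.negMulLog ((1 - t) / 2))
      ((-Real.log ((1 - x) / 2) - 1) * (-1 / 2)) x :=
    by have := (Real.hasDerivAt_negMulLog hv.ne').comp x hB; exact this
  have h := hAu.add hBv
  have heq : skEntropy = fun t : ℝ =>
      Real.negMulLog ((1 + t) / 2) + Real.negMulLog ((1 - t) / 2) := by
    funext t
    simp only [skEntropy, Real.negMulLog]
    ring
  rw [heq]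
  refine h.congr_deriv ?_
  have hratio : (1 + x) / (1 - x) = ((1 + x) / 2) / ((1 - x) / 2) := by
    have h2' : (1:ℝ) - x ≠ 0 := by linarith
    field_simp
  have hlog : Real.log ((1 + x) / (1 - x))
      = Real.log ((1 + x) / 2) - Real.log ((1 - x) / 2) := by
    rw [hratio, Real.log_div hu.ne' hv.ne']
  simp only [skAtanh, hlog]
  ring

lemma hasDerivAt_skAtanh {x : ℝ} (hx : x ∈ Ioo (-1 : ℝ) 1) :
    HasDerivAt skAtanh (1 / (1 - x ^ 2)) x := by
  obtain ⟨h1, h2⟩ := hx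
  have hp : (0:ℝ) < 1 + x := by linarith
  have hq : (0:ℝ) < 1 - x := by linarith
  have hd1 : HasDerivAt (fun t : ℝ => Real.log (1 + t)) (1 / (1 + x)) x := by
    have := ((hasDerivAt_id x).const_add 1).log hp.ne'
    simpa using this
  have hd2 : HasDerivAt (fun t : ℝ => Real.log (1 - t)) (-1 / (1 - x)) x := by
    have := ((hasDerivAt_id x).const_sub 1).log hq.ne'
    simpa using this
  have h := ((hd1.sub hd2).const_mul (1 / 2 : ℝ))
  have heq : skAtanh =ᶠ[nhds x]
      (fun t : ℝ => (1 / 2) * (Real.log (1 + t) - Real.log (1 - t))) := by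
    have hmem : Ioo (-1 : ℝ) 1 ∈ nhds x := isOpen_Ioo.mem_nhds ⟨h1, h2⟩
    filter_upwards [hmem] with t ht
    have hp' : (0:ℝ) < 1 + t := by linarith [ht.1]
    have hq' : (0:ℝ) < 1 - t := by linarith [ht.2]
    simp only [skAtanh]
    rw [Real.log_div hp'.ne' hq'.ne']
  have := h.congr_of_eventuallyEq heq
  refine this.congr_deriv ?_
  have hxx : (1:ℝ) - x ^ 2 ≠ 0 := by nlinarith
  field_simp
  ring

lemma key1d {x y : ℝ} (hx : x ∈ Ioo (-1 : ℝ) 1) (hy : y ∈ Ioo (-1 : ℝ) 1) :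
    -skEntropy x + skEntropy y + (-skAtanh y) * (x - y) ≥ (x - y) ^ 2 / 2 := by
  set F : ℝ → ℝ := fun t => -skEntropy t - t ^ 2 / 2 with hF
  have hF' : ∀ t ∈ Ioo (-1 : ℝ) 1, HasDerivAt F (skAtanh t - t) t := by
    intro t ht
    have h1 := (hasDerivAt_skEntropy ht).neg
    have h2 : HasDerivAt (fun s : ℝ => s ^ 2 / 2) t t := by
      simpa using (hasDerivAt_pow 2 t).div_const 2
    have h3 := h1.sub h2; rw [neg_neg] at h3; exact h3
  have hF'' : ∀ t ∈ Ioo (-1 : ℝ) 1,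
      HasDerivAt (fun s => skAtanh s - s) (1 / (1 - t ^ 2) - 1) t := by
    intro t ht
    exact (hasDerivAt_skAtanh ht).sub (hasDerivAt_id t)
  have hconv : ConvexOn ℝ (Ioo (-1 : ℝ) 1) F := by
    apply convexOn_of_hasDerivWithinAt2_nonneg (f' := fun t => skAtanh t - t)
      (f'' := fun t => 1 / (1 - t ^ 2) - 1) (convex_Ioo _ _)
    · exact fun t ht => (hF' t ht).continuousAt.continuousWithinAt
    · intro t ht
      rw [interior_Ioo] at ht
      exact (hF' t ht).hasDerivWithinAt
    · intro t ht
      rw [interior_Ioo] at ht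
      exact (hF'' t ht).hasDerivWithinAt
    · intro t ht
      rw [interior_Ioo] at ht
      have h01 : (0:ℝ) < 1 - t ^ 2 := by nlinarith [ht.1, ht.2]
      have : (1:ℝ) ≤ 1 / (1 - t ^ 2) := by
        rw [le_div_iff₀ h01]; nlinarith [sq_nonneg t]
      linarith
  have hkey : F x - F y ≥ (skAtanh y - y) * (x - y) := by
    rcases lt_trichotomy x y with hlt | heqc | hgt
    · have h := hconv.slope_le_of_hasDerivAt hx hy hlt (hF' y hy)
      rw [slope_def_field] at h
      have h0 : (0:ℝ) < y - x := by linarith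
      have h' := (div_le_iff₀ h0).mp h
      have hr : (skAtanh y - y) * (x - y) = -((skAtanh y - y) * (y - x)) := by ring
      rw [ge_iff_le, hr]
      linarith
    · subst heqc; simp
    · have h := hconv.le_slope_of_hasDerivAt hy hx hgt (hF' y hy)
      rw [slope_def_field] at h
      have h0 : (0:ℝ) < x - y := by linarith
      have h' := (le_div_iff₀ h0).mp h
      linarith
  simp only [hF] at hkey
  nlinarith [hkey]

/-- For `m, n ∈ (-1,1)^n`, `D_{-h}(m,n) ≥ ‖m-n‖₂²/2`. -/
theorem stmt1 {d : ℕ} (m n : Fin d → ℝ)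
    (hm : ∀ i, m i ∈ Ioo (-1 : ℝ) 1) (hn : ∀ i, n i ∈ Ioo (-1 : ℝ) 1) :
    bregman m n ≥ (∑ i, (m i - n i) ^ 2) / 2 := by
  have hb : bregman m n
      = ∑ i, (-skEntropy (m i) + skEntropy (n i) + (-skAtanh (n i)) * (m i - n i)) := by
    simp [bregman, skEntropyVec, Finset.sum_add_distrib, Finset.sum_neg_distrib]
  rw [ge_iff_le, hb, Finset.sum_div]
  exact Finset.sum_le_sum fun i _ => key1d (hm i) (hn i)
end

section
/- For m, n ∈ (-1,1)^n, the Bregman divergence of the negative binary entropy satisfies D_{-h}(m,n) ≤ ‖atanh(m) - atanh(n)‖₂², where atanh is applied coordinate-wise. -/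
open Real Set Finset

lemma skAtanh_strictMonoOn : StrictMonoOn skAtanh (Ioo (-1 : ℝ) 1) := by
  apply strictMonoOn_of_hasDerivWithinAt_pos (convex_Ioo _ _)
    (fun x hx => (hasDerivAt_skAtanh hx).continuousAt.continuousWithinAt)
    (f' := fun x => 1 / (1 - x ^ 2))
  · intro x hx
    rw [interior_Ioo] at hx
    exact (hasDerivAt_skAtanh hx).hasDerivWithinAt
  · intro x hx
    rw [interior_Ioo] at hx
    have : (0:ℝ) < 1 - x ^ 2 := by nlinarith [hx.1, hx.2]
    positivity

lemma key_ineq {a b : ℝ} (ha : a ∈ Ioo (-1 : ℝ) 1) (hb : b ∈ Ioo (-1 : ℝ) 1) :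
    -skEntropy a + skEntropy b + (-skAtanh b) * (a - b) ≤ (skAtanh a - skAtanh b) ^ 2 := by
  set G : ℝ → ℝ := fun y => (skAtanh y - skAtanh b) ^ 2 + skEntropy y + skAtanh b * (y - b)
    with hGdef
  have hG : ∀ y ∈ Ioo (-1 : ℝ) 1,
      HasDerivAt G ((skAtanh y - skAtanh b) * (2 / (1 - y ^ 2) - 1)) y := by
    intro y hy
    have hy2 : y ^ 2 < 1 := by nlinarith [hy.1, hy.2]
    have h1 : (1:ℝ) - y ^ 2 ≠ 0 := by linarith
    have d1 : HasDerivAt (fun y => (skAtanh y - skAtanh b) ^ 2)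
        (2 * (skAtanh y - skAtanh b) ^ 1 * (1 / (1 - y ^ 2))) y :=
      ((hasDerivAt_skAtanh hy).sub_const (skAtanh b)).pow 2
    have d3 : HasDerivAt (fun y => skAtanh b * (y - b)) (skAtanh b * 1) y :=
      ((hasDerivAt_id y).sub_const b).const_mul (skAtanh b)
    have hd := (d1.add (hasDerivAt_skEntropy hy)).add d3
    refine hd.congr_deriv ?_
    field_simp
    ring
  have hGb : G b = skEntropy b := by simp [hGdef]
  have hgoal : G b ≤ G a → -skEntropy a + skEntropy b + (-skAtanh b) * (a - b)
      ≤ (skAtanh a - skAtanh b) ^ 2 := by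
    intro h
    rw [hGb] at h
    simp only [hGdef] at h
    linarith
  apply hgoal
  rcases le_total b a with hba | hab
  · have hsub : Icc b a ⊆ Ioo (-1 : ℝ) 1 := fun y hy =>
      ⟨lt_of_lt_of_le hb.1 hy.1, lt_of_le_of_lt hy.2 ha.2⟩
    have hmono : MonotoneOn G (Icc b a) := by
      apply monotoneOn_of_hasDerivWithinAt_nonneg (convex_Icc _ _)
        (fun y hy => (hG y (hsub hy)).continuousAt.continuousWithinAt)
        (f' := fun y => (skAtanh y - skAtanh b) * (2 / (1 - y ^ 2) - 1))
      · intro y hy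
        rw [interior_Icc] at hy
        exact (hG y (hsub (Ioo_subset_Icc_self hy))).hasDerivWithinAt
      · intro y hy
        rw [interior_Icc] at hy
        have hyI := hsub (Ioo_subset_Icc_self hy)
        have hy2 : y ^ 2 < 1 := by nlinarith [hyI.1, hyI.2]
        have h1 : (0:ℝ) < 1 - y ^ 2 := by linarith
        have hat : skAtanh b ≤ skAtanh y := le_of_lt (skAtanh_strictMonoOn hb hyI hy.1)
        have hfac : (0:ℝ) ≤ 2 / (1 - y ^ 2) - 1 := by
          have : (1:ℝ) ≤ 2 / (1 - y ^ 2) := by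
            rw [le_div_iff₀ h1]; nlinarith
          linarith
        exact mul_nonneg (by linarith) hfac
    exact hmono (left_mem_Icc.mpr hba) (right_mem_Icc.mpr hba) hba
  · have hsub : Icc a b ⊆ Ioo (-1 : ℝ) 1 := fun y hy =>
      ⟨lt_of_lt_of_le ha.1 hy.1, lt_of_le_of_lt hy.2 hb.2⟩
    have hanti : AntitoneOn G (Icc a b) := by
      apply antitoneOn_of_hasDerivWithinAt_nonpos (convex_Icc _ _)
        (fun y hy => (hG y (hsub hy)).continuousAt.continuousWithinAt)
        (f' := fun y => (skAtanh y - skAtanh b) * (2 / (1 - y ^ 2) - 1))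
      · intro y hy
        rw [interior_Icc] at hy
        exact (hG y (hsub (Ioo_subset_Icc_self hy))).hasDerivWithinAt
      · intro y hy
        rw [interior_Icc] at hy
        have hyI := hsub (Ioo_subset_Icc_self hy)
        have hy2 : y ^ 2 < 1 := by nlinarith [hyI.1, hyI.2]
        have h1 : (0:ℝ) < 1 - y ^ 2 := by linarith
        have hat : skAtanh y ≤ skAtanh b := le_of_lt (skAtanh_strictMonoOn hyI hb hy.2)
        have hfac : (0:ℝ) ≤ 2 / (1 - y ^ 2) - 1 := by
          have : (1:ℝ) ≤ 2 / (1 - y ^ 2) := by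
            rw [le_div_iff₀ h1]; nlinarith
          linarith
        exact mul_nonpos_of_nonpos_of_nonneg (by linarith) hfac
    exact hanti (left_mem_Icc.mpr hab) (right_mem_Icc.mpr hab) hab

/-- For `m, n ∈ (-1,1)^n`, `D_{-h}(m,n) ≤ ‖atanh(m)-atanh(n)‖₂²`. -/
theorem stmt2 {d : ℕ} (m n : Fin d → ℝ)
    (hm : ∀ i, m i ∈ Ioo (-1 : ℝ) 1) (hn : ∀ i, n i ∈ Ioo (-1 : ℝ) 1) :
    bregman m n ≤ ∑ i, (skAtanh (m i) - skAtanh (n i)) ^ 2 := by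
  have hb : bregman m n
      = ∑ i, (-skEntropy (m i) + skEntropy (n i) + (-skAtanh (n i)) * (m i - n i)) := by
    rw [bregman, skEntropyVec, skEntropyVec, Finset.sum_add_distrib, Finset.sum_add_distrib,
      ← Finset.sum_neg_distrib]
  rw [hb]
  exact Finset.sum_le_sum fun i _ => key_ineq (hm i) (hn i)
end

section
/- Fix β ∈ (0,1) and t > 0. Let mmse(γ) = 1 - E[tanh(γ + √γ W)²] for standard Gaussian W. Then the fixed point equation γ* = β²(1 - mmse(γ* + t)) has a unique non-negative solution γ*(β,t), and the iterates defined by γ₀ = 0, γ_{k+1} = β²(1 - mmse(γ_k + t)) converge to γ*(β,t) with 1 - β^{2k} ≤ γ_k(β,t)/γ*(β,t) ≤ 1 for all k ≥ 0. -/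
open MeasureTheory ProbabilityTheory Set Filter

open Real in
open scoped ENNReal NNReal in
section
namespace Stmt8aux
open Real
open scoped ENNReal NNReal



lemma tanh_sq_lt_one (x : ℝ) : Real.tanh x ^ 2 < 1 := by
  rw [Real.tanh_eq_sinh_div_cosh, div_pow, div_lt_one (by positivity)]
  nlinarith [Real.cosh_sq_sub_sinh_sq x, Real.cosh_pos x]

lemma abs_tanh_le_one (x : ℝ) : |Real.tanh x| ≤ 1 := by
  nlinarith [tanh_sq_lt_one x, sq_abs (Real.tanh x), abs_nonneg (Real.tanh x)]

lemma hasDerivAt_tanh (x : ℝ) : HasDerivAt Real.tanh (1 - Real.tanh x ^ 2) x := by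
  have h := (Real.hasDerivAt_sinh x).div (Real.hasDerivAt_cosh x) (Real.cosh_pos x).ne'
  have he : Real.tanh = fun y => Real.sinh y / Real.cosh y := by
    funext y; exact Real.tanh_eq_sinh_div_cosh y
  have h2 : (1 - Real.tanh x ^ 2) =
      (Real.cosh x * Real.cosh x - Real.sinh x * Real.sinh x) / Real.cosh x ^ 2 := by
    rw [Real.tanh_eq_sinh_div_cosh, div_pow]
    field_simp
  rw [h2, he]; exact h

lemma continuous_tanh : Continuous Real.tanh :=
  continuous_iff_continuousAt.2 fun x => (hasDerivAt_tanh x).continuousAt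

lemma tanh_ne_zero {x : ℝ} (hx : x ≠ 0) : Real.tanh x ≠ 0 := by
  rw [Real.tanh_eq_sinh_div_cosh]
  exact div_ne_zero (by simpa using hx) (Real.cosh_pos x).ne'

lemma tanh_mul_exp (x : ℝ) :
    Real.tanh x * (1 + Real.exp (-(2 * x))) = 1 - Real.exp (-(2 * x)) := by
  rw [Real.tanh_eq_sinh_div_cosh, Real.sinh_eq, Real.cosh_eq]
  have h1 : Real.exp x * Real.exp (-x) = 1 := by rw [← Real.exp_add]; simp
  have h2 : Real.exp (-(2 * x)) = Real.exp (-x) * Real.exp (-x) := by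
    rw [← Real.exp_add]; ring_nf
  have h3 : (0:ℝ) < Real.exp x + Real.exp (-x) := by positivity
  field_simp
  rw [mul_comm x 2, h2]
  linear_combination 2 * Real.exp (-x) * h1



lemma gaussianPDF_eq (m : ℝ) (v : ℝ≥0) :
    gaussianPDF m v = fun x => ((gaussianPDFReal m v x).toNNReal : ℝ≥0∞) := rfl

lemma integral_gaussianReal_eq (m : ℝ) (v : ℝ≥0) (hv : v ≠ 0) (f : ℝ → ℝ) :
    ∫ x, f x ∂(gaussianReal m v) = ∫ x, gaussianPDFReal m v x * f x := by
  rw [gaussianReal_of_var_ne_zero m hv, gaussianPDF_eq,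
    integral_withDensity_eq_integral_smul
      ((measurable_gaussianPDFReal m v).real_toNNReal) f]
  congr 1; funext x
  simp [NNReal.smul_def, Real.coe_toNNReal _ (gaussianPDFReal_nonneg m v x)]

lemma integrable_gaussianReal_of_bound (m : ℝ) (v : ℝ≥0) (f : ℝ → ℝ) (C : ℝ)
    (hmeas : AEStronglyMeasurable f (gaussianReal m v)) (hC : ∀ x, |f x| ≤ C) :
    Integrable f (gaussianReal m v) :=
  (integrable_const C).mono' hmeas (ae_of_all _ fun x => by
    simpa [Real.norm_eq_abs] using hC x)

lemma pdf01_eq (x : ℝ) :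
    gaussianPDFReal 0 1 x = (Real.sqrt (2 * π))⁻¹ * Real.exp (-(1/2 : ℝ) * x ^ 2) := by
  rw [gaussianPDFReal]
  norm_num
  left
  ring_nf

lemma integrable_abs_gaussian : Integrable (fun x => |x|) (gaussianReal 0 1) := by
  rw [gaussianReal_of_var_ne_zero 0 one_ne_zero, gaussianPDF_eq,
    integrable_withDensity_iff_integrable_smul
      ((measurable_gaussianPDFReal 0 1).real_toNNReal)]
  have key : Integrable (fun x : ℝ => x * Real.exp (-(1/2 : ℝ) * x ^ 2)) volume :=
    integrable_mul_exp_neg_mul_sq (by norm_num)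
  refine (key.abs.const_mul ((Real.sqrt (2 * π))⁻¹)).mono'
    ((((measurable_gaussianPDFReal 0 1).real_toNNReal).coe_nnreal_real.mul
      measurable_abs).aestronglyMeasurable) (ae_of_all _ fun x => ?_)
  have hnn := gaussianPDFReal_nonneg 0 1 x
  simp only [NNReal.smul_def, Real.coe_toNNReal _ hnn, Real.norm_eq_abs, smul_eq_mul]
  rw [abs_of_nonneg (mul_nonneg hnn (abs_nonneg x)), pdf01_eq, abs_mul,
    abs_of_nonneg (Real.exp_pos _).le]
  ring_nf
  exact le_refl _

lemma map_affine (γ : ℝ) (hγ : 0 < γ) :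
    (gaussianReal 0 1).map (fun w => γ + Real.sqrt γ * w) = gaussianReal γ γ.toNNReal := by
  have h1 : (gaussianReal 0 1).map (fun w => Real.sqrt γ * w) = gaussianReal 0 γ.toNNReal := by
    have := gaussianReal_map_const_mul (μ := 0) (v := 1) (Real.sqrt γ)
    simp only [mul_zero, mul_one] at this
    rw [show (γ.toNNReal) = (⟨Real.sqrt γ ^ 2, sq_nonneg _⟩ : ℝ≥0) from by
      ext; simp [Real.sq_sqrt hγ.le, Real.coe_toNNReal γ hγ.le]; rfl]
    exact this
  have h2 : (fun w => γ + Real.sqrt γ * w) = (fun x => γ + x) ∘ (fun w => Real.sqrt γ * w) := rfl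
  rw [h2, ← Measure.map_map (measurable_const_add γ) (measurable_const_mul _), h1,
    gaussianReal_map_const_add γ, zero_add]

/-- Change of variables: integral against the standard Gaussian of `f (γ + √γ w)`. -/
lemma integral_shift (γ : ℝ) (hγ : 0 < γ) (f : ℝ → ℝ) (hf : AEStronglyMeasurable f volume) :
    ∫ w, f (γ + Real.sqrt γ * w) ∂(gaussianReal 0 1)
      = ∫ x, gaussianPDFReal γ γ.toNNReal x * f x := by
  have hγ' : γ.toNNReal ≠ 0 := by simp [Real.toNNReal_eq_zero, not_le, hγ]
  have hmeas : AEStronglyMeasurable f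
      ((gaussianReal 0 1).map (fun w => γ + Real.sqrt γ * w)) := by
    rw [map_affine γ hγ]
    exact hf.mono_ac (gaussianReal_absolutelyContinuous γ hγ')
  rw [← integral_gaussianReal_eq γ γ.toNNReal hγ' f, ← map_affine γ hγ,
    integral_map ((measurable_const_mul (Real.sqrt γ)).const_add γ).aemeasurable hmeas]



lemma pdf_form (γ : ℝ) (hγ : 0 < γ) (y : ℝ) :
    gaussianPDFReal γ γ.toNNReal y
      = (Real.sqrt (2 * π * γ))⁻¹ * Real.exp (-(y - γ) ^ 2 / (2 * γ)) := by
  rw [gaussianPDFReal]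
  simp [Real.coe_toNNReal γ hγ.le]

lemma pdf_reflect (γ : ℝ) (hγ : 0 < γ) (x : ℝ) :
    gaussianPDFReal γ γ.toNNReal (-x)
      = Real.exp (-(2 * x)) * gaussianPDFReal γ γ.toNNReal x := by
  rw [pdf_form γ hγ, pdf_form γ hγ,
    show Real.exp (-(2 * x)) * ((Real.sqrt (2 * π * γ))⁻¹ * Real.exp (-(x - γ) ^ 2 / (2 * γ)))
      = (Real.sqrt (2 * π * γ))⁻¹ * (Real.exp (-(2 * x)) * Real.exp (-(x - γ) ^ 2 / (2 * γ)))
      from by ring, ← Real.exp_add]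
  congr 1
  field_simp
  ring

lemma pdf_reflect' (γ : ℝ) (v : ℝ≥0) (x : ℝ) :
    gaussianPDFReal γ v (-x) = gaussianPDFReal (-γ) v x := by
  rw [gaussianPDFReal, gaussianPDFReal]
  congr 2
  ring

lemma integrable_pdf_mul (m : ℝ) (v : ℝ≥0) (g : ℝ → ℝ) (hg : Continuous g) (C : ℝ)
    (hC : ∀ x, |g x| ≤ C) :
    Integrable (fun x => gaussianPDFReal m v x * g x) volume := by
  have h := (integrable_gaussianPDFReal m v).bdd_mul hg.aestronglyMeasurable
    (ae_of_all _ fun x => by simpa [Real.norm_eq_abs] using hC x)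
  simpa [mul_comm] using h

lemma nishimori (γ : ℝ) (hγ : 0 < γ) :
    ∫ x, gaussianPDFReal γ γ.toNNReal x * (Real.tanh x * (1 - Real.tanh x ^ 2))
      = ∫ x, gaussianPDFReal γ γ.toNNReal x * (Real.tanh x ^ 2 * (1 - Real.tanh x ^ 2)) := by
  set ρ : ℝ → ℝ := gaussianPDFReal γ γ.toNNReal with hρ
  set q : ℝ → ℝ := fun x => Real.tanh x * (1 - Real.tanh x ^ 2) with hq
  set r : ℝ → ℝ := fun x => Real.tanh x ^ 2 * (1 - Real.tanh x ^ 2) with hr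
  have hqc : Continuous q := continuous_tanh.mul (continuous_const.sub (continuous_tanh.pow 2))
  have hrc : Continuous r :=
    (continuous_tanh.pow 2).mul (continuous_const.sub (continuous_tanh.pow 2))
  have hqb : ∀ x, |q x| ≤ 1 := fun x => by
    rw [hq, abs_mul]
    have h1 := abs_tanh_le_one x
    have h2 : |1 - Real.tanh x ^ 2| ≤ 1 := by
      rw [abs_of_nonneg (by nlinarith [tanh_sq_lt_one x])]
      nlinarith [sq_nonneg (Real.tanh x)]
    nlinarith [abs_nonneg (Real.tanh x), abs_nonneg (1 - Real.tanh x ^ 2)]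
  have hrb : ∀ x, |r x| ≤ 1 := fun x => by
    rw [hr, abs_mul]
    have h1 : |Real.tanh x ^ 2| ≤ 1 := by
      rw [abs_of_nonneg (sq_nonneg _)]; exact (tanh_sq_lt_one x).le
    have h2 : |1 - Real.tanh x ^ 2| ≤ 1 := by
      rw [abs_of_nonneg (by nlinarith [tanh_sq_lt_one x])]
      nlinarith [sq_nonneg (Real.tanh x)]
    nlinarith [abs_nonneg (Real.tanh x ^ 2), abs_nonneg (1 - Real.tanh x ^ 2)]
  -- integrability
  have I1 : Integrable (fun x => ρ x * q x) volume :=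
    integrable_pdf_mul _ _ q hqc 1 hqb
  have I2 : Integrable (fun x => ρ x * r x) volume :=
    integrable_pdf_mul _ _ r hrc 1 hrb
  have hneg : ∀ x, Real.exp (-(2 * x)) * ρ x = gaussianPDFReal (-γ) γ.toNNReal x := fun x => by
    rw [← pdf_reflect γ hγ x]
    exact pdf_reflect' γ γ.toNNReal x
  have I3 : Integrable (fun x => Real.exp (-(2 * x)) * ρ x * q x) volume := by
    have := integrable_pdf_mul (-γ) γ.toNNReal q hqc 1 hqb
    refine this.congr (ae_of_all _ fun x => ?_)
    dsimp only
    rw [← hneg x]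
  have I4 : Integrable (fun x => Real.exp (-(2 * x)) * ρ x * r x) volume := by
    have := integrable_pdf_mul (-γ) γ.toNNReal r hrc 1 hrb
    refine this.congr (ae_of_all _ fun x => ?_)
    dsimp only
    rw [← hneg x]
  -- symmetrization for A
  have hA : ∫ x, ρ x * q x = - ∫ x, Real.exp (-(2 * x)) * ρ x * q x := by
    have h1 : ∫ x, ρ (-x) * q (-x) = ∫ x, ρ x * q x :=
      integral_neg_eq_self (fun x => ρ x * q x) volume
    rw [← h1]
    have h2 : ∀ x, ρ (-x) * q (-x) = -(Real.exp (-(2 * x)) * ρ x * q x) := fun x => by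
      rw [hρ, pdf_reflect γ hγ x, hq]
      simp only [Real.tanh_neg]
      ring
    simp_rw [h2]
    rw [integral_neg]
  have hB : ∫ x, ρ x * r x = ∫ x, Real.exp (-(2 * x)) * ρ x * r x := by
    have h1 : ∫ x, ρ (-x) * r (-x) = ∫ x, ρ x * r x :=
      integral_neg_eq_self (fun x => ρ x * r x) volume
    rw [← h1]
    have h2 : ∀ x, ρ (-x) * r (-x) = Real.exp (-(2 * x)) * ρ x * r x := fun x => by
      rw [hρ, pdf_reflect γ hγ x, hr]
      simp only [Real.tanh_neg]
      ring
    simp_rw [h2]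
  -- 2A = ∫ ρ q (1 - e), 2B = ∫ ρ r (1 + e)
  have h2A : (2:ℝ) * ∫ x, ρ x * q x
      = ∫ x, ρ x * q x * (1 - Real.exp (-(2 * x))) := by
    have := integral_sub I1 I3
    rw [two_mul]
    nth_rewrite 2 [hA]
    rw [← sub_eq_add_neg, ← this]
    congr 1; funext x; ring
  have h2B : (2:ℝ) * ∫ x, ρ x * r x
      = ∫ x, ρ x * r x * (1 + Real.exp (-(2 * x))) := by
    have := integral_add I2 I4
    rw [two_mul]
    nth_rewrite 2 [hB]
    rw [← this]
    congr 1; funext x; ring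
  have hpt : ∀ x, ρ x * q x * (1 - Real.exp (-(2 * x)))
      = ρ x * r x * (1 + Real.exp (-(2 * x))) := fun x => by
    have h := tanh_mul_exp x
    show ρ x * (Real.tanh x * (1 - Real.tanh x ^ 2)) * (1 - Real.exp (-(2 * x)))
      = ρ x * (Real.tanh x ^ 2 * (1 - Real.tanh x ^ 2)) * (1 + Real.exp (-(2 * x)))
    linear_combination (-(ρ x * (1 - Real.tanh x ^ 2) * Real.tanh x)) * h
  have : (2:ℝ) * ∫ x, ρ x * q x = (2:ℝ) * ∫ x, ρ x * r x := by
    rw [h2A, h2B]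
    congr 1; funext x; exact hpt x
  linarith


lemma continuous_pdf01 : Continuous (gaussianPDFReal 0 1) := by
  have : gaussianPDFReal 0 1
      = fun x => (Real.sqrt (2 * π))⁻¹ * Real.exp (-(1/2 : ℝ) * x ^ 2) := by
    funext x; exact pdf01_eq x
  rw [this]
  exact continuous_const.mul ((continuous_const.mul (continuous_pow 2)).rexp)

lemma hasDerivAt_pdf01 (x : ℝ) :
    HasDerivAt (gaussianPDFReal 0 1) (-x * gaussianPDFReal 0 1 x) x := by
  have hform : gaussianPDFReal 0 1
      = fun y => (Real.sqrt (2 * π))⁻¹ * Real.exp (-(1/2 : ℝ) * y ^ 2) := by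
    funext y; exact pdf01_eq y
  have h1 : HasDerivAt (fun y : ℝ => -(1/2 : ℝ) * y ^ 2) (-x) x := by
    have := (hasDerivAt_pow 2 x).const_mul (-(1/2 : ℝ))
    refine this.congr_deriv ?_
    simp
  have h2 := (h1.exp).const_mul ((Real.sqrt (2 * π))⁻¹)
  rw [hform]
  refine h2.congr_deriv ?_
  dsimp only
  ring

lemma tendsto_pdf01_atTop : Tendsto (gaussianPDFReal 0 1) atTop (nhds 0) := by
  have hsq : Tendsto (fun x : ℝ => -(1/2 : ℝ) * x ^ 2) atTop atBot := by
    apply Tendsto.const_mul_atTop_of_neg (by norm_num : (-(1/2 : ℝ)) < 0)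
    exact tendsto_pow_atTop two_ne_zero
  have := (Real.tendsto_exp_atBot.comp hsq).const_mul ((Real.sqrt (2 * π))⁻¹)
  simp only [mul_zero] at this
  refine this.congr fun x => ?_
  rw [pdf01_eq]; rfl

lemma tendsto_pdf01_atBot : Tendsto (gaussianPDFReal 0 1) atBot (nhds 0) := by
  have h := tendsto_pdf01_atTop.comp tendsto_neg_atBot_atTop
  refine h.congr fun x => ?_
  simp only [Function.comp_apply]
  rw [pdf01_eq, pdf01_eq]
  ring_nf

lemma integrable_mul_pdf01 : Integrable (fun x => x * gaussianPDFReal 0 1 x) volume := by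
  have key : Integrable (fun x : ℝ => x * Real.exp (-(1/2 : ℝ) * x ^ 2)) volume :=
    integrable_mul_exp_neg_mul_sq (by norm_num)
  have := key.const_mul ((Real.sqrt (2 * π))⁻¹)
  refine this.congr (ae_of_all _ fun x => ?_)
  dsimp only
  rw [pdf01_eq]; ring

/-- Stein's identity / Gaussian integration by parts. -/
lemma stein (g g' : ℝ → ℝ) (hd : ∀ x, HasDerivAt g (g' x) x) (hg'c : Continuous g')
    (C C' : ℝ) (hb : ∀ x, |g x| ≤ C) (hb' : ∀ x, |g' x| ≤ C') :
    ∫ w, w * g w ∂(gaussianReal 0 1) = ∫ w, g' w ∂(gaussianReal 0 1) := by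
  have hgc : Continuous g := continuous_iff_continuousAt.2 fun x => (hd x).continuousAt
  set φg : ℝ → ℝ := gaussianPDFReal 0 1 with hφg
  have hC0 : 0 ≤ C := le_trans (abs_nonneg _) (hb 0)
  -- derivative of H = g * φ
  set H : ℝ → ℝ := fun x => g x * φg x with hH
  set h : ℝ → ℝ := fun x => g' x * φg x - x * (g x * φg x) with hh
  have hHd : ∀ x, HasDerivAt H (h x) x := by
    intro x
    have := (hd x).mul (hasDerivAt_pdf01 x)
    refine this.congr_deriv ?_
    rw [hh]
    dsimp only
    ring
  -- H tends to 0 at ±∞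
  have hHbound : ∀ x, |H x| ≤ C * φg x := fun x => by
    rw [hH]
    dsimp only
    rw [abs_mul, abs_of_nonneg (gaussianPDFReal_nonneg 0 1 x)]
    exact mul_le_mul_of_nonneg_right (hb x) (gaussianPDFReal_nonneg 0 1 x)
  have hHtop : Tendsto H atTop (nhds 0) := by
    have hup := tendsto_pdf01_atTop.const_mul C
    rw [mul_zero] at hup
    exact tendsto_of_tendsto_of_tendsto_of_le_of_le (g := fun x => -(C * φg x))
      (h := fun x => C * φg x) (by simpa using hup.neg) hup
      (fun x => neg_le_of_abs_le (hHbound x)) (fun x => le_of_abs_le (hHbound x))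
  have hHbot : Tendsto H atBot (nhds 0) := by
    have hup := tendsto_pdf01_atBot.const_mul C
    rw [mul_zero] at hup
    exact tendsto_of_tendsto_of_tendsto_of_le_of_le (g := fun x => -(C * φg x))
      (h := fun x => C * φg x) (by simpa using hup.neg) hup
      (fun x => neg_le_of_abs_le (hHbound x)) (fun x => le_of_abs_le (hHbound x))
  -- integrability
  have Ia : Integrable (fun x => g' x * φg x) volume := by
    have := integrable_pdf_mul 0 1 g' hg'c C' hb'
    refine this.congr (ae_of_all _ fun x => ?_)
    dsimp only
    ring
  have Ib : Integrable (fun x => x * (g x * φg x)) volume := by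
    refine (integrable_mul_pdf01.abs.const_mul C).mono'
      ((continuous_id.mul (hgc.mul continuous_pdf01)).aestronglyMeasurable)
      (ae_of_all _ fun x => ?_)
    have e1 : ‖x * (g x * φg x)‖ = |x| * (|g x| * φg x) := by
      rw [Real.norm_eq_abs, abs_mul, abs_mul, abs_of_nonneg (gaussianPDFReal_nonneg 0 1 x)]
    have e2 : C * |x * gaussianPDFReal 0 1 x| = C * (|x| * φg x) := by
      rw [abs_mul, abs_of_nonneg (gaussianPDFReal_nonneg 0 1 x)]
    have h1 : |x| * (|g x| * φg x) ≤ |x| * (C * φg x) :=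
      mul_le_mul_of_nonneg_left
        (mul_le_mul_of_nonneg_right (hb x) (gaussianPDFReal_nonneg 0 1 x)) (abs_nonneg x)
    calc ‖x * (g x * φg x)‖ = |x| * (|g x| * φg x) := e1
      _ ≤ |x| * (C * φg x) := h1
      _ = C * (|x| * φg x) := by ring
      _ = C * |x * gaussianPDFReal 0 1 x| := e2.symm
  have Ih : Integrable h volume := Ia.sub Ib
  -- FTC on both half-lines
  have hIoi : ∫ x in Ioi (0:ℝ), h x = 0 - H 0 :=
    integral_Ioi_of_hasDerivAt_of_tendsto' (fun x _ => hHd x) Ih.integrableOn hHtop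
  have hIic : ∫ x in Iic (0:ℝ), h x = H 0 - 0 :=
    integral_Iic_of_hasDerivAt_of_tendsto' (fun x _ => hHd x) Ih.integrableOn hHbot
  have htot : ∫ x, h x = 0 := by
    rw [← intervalIntegral.integral_Iic_add_Ioi (b := (0:ℝ)) Ih.integrableOn Ih.integrableOn, hIoi, hIic]
    ring
  have hsplit : ∫ x, g' x * φg x = ∫ x, x * (g x * φg x) := by
    have := integral_sub Ia Ib
    have h0 : ∫ x, (g' x * φg x - x * (g x * φg x)) = 0 := htot
    rw [h0] at this
    linarith [this]
  -- convert back to Gaussian integrals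
  rw [integral_gaussianReal_eq 0 1 one_ne_zero (fun w => w * g w),
    integral_gaussianReal_eq 0 1 one_ne_zero g']
  calc ∫ x, gaussianPDFReal 0 1 x * (x * g x) = ∫ x, x * (g x * φg x) := by
        congr 1; funext x; rw [hφg]; ring
    _ = ∫ x, g' x * φg x := hsplit.symm
    _ = ∫ x, gaussianPDFReal 0 1 x * g' x := by
        congr 1; funext x; rw [hφg]; ring

/-- The function `F γ = E[tanh(γ + √γ W)²]`. -/
noncomputable def Fg (γ : ℝ) : ℝ :=
  ∫ w, Real.tanh (γ + Real.sqrt γ * w) ^ 2 ∂(gaussianReal 0 1)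

lemma one_sub_tanh_sq_bounds (x : ℝ) : 0 < 1 - Real.tanh x ^ 2 ∧ 1 - Real.tanh x ^ 2 ≤ 1 :=
  ⟨by nlinarith [tanh_sq_lt_one x], by nlinarith [sq_nonneg (Real.tanh x)]⟩

lemma Fg_nonneg (γ : ℝ) : 0 ≤ Fg γ :=
  integral_nonneg fun w => sq_nonneg _

lemma Fg_le_one (γ : ℝ) : Fg γ ≤ 1 := by
  have h : Fg γ ≤ ∫ (_ : ℝ), (1:ℝ) ∂(gaussianReal 0 1) := by
    apply integral_mono
    · exact integrable_gaussianReal_of_bound 0 1 _ 1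
        ((continuous_tanh.comp (continuous_const.add (continuous_const.mul continuous_id))).pow
          2).aestronglyMeasurable
        (fun w => by
          rw [abs_of_nonneg (sq_nonneg _)]
          exact (tanh_sq_lt_one _).le)
    · exact integrable_const 1
    · intro w
      exact (tanh_sq_lt_one _).le
  simpa using h

/-- The candidate derivative of `Fg`. -/
noncomputable def Dg (γ : ℝ) : ℝ :=
  ∫ w, (1 - Real.tanh (γ + Real.sqrt γ * w) ^ 2) ^ 2 ∂(gaussianReal 0 1)

lemma Dg_nonneg (γ : ℝ) : 0 ≤ Dg γ := integral_nonneg fun w => sq_nonneg _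

lemma Dg_le_one (γ : ℝ) : Dg γ ≤ 1 := by
  have h : Dg γ ≤ ∫ (_ : ℝ), (1:ℝ) ∂(gaussianReal 0 1) := by
    apply integral_mono
    · refine integrable_gaussianReal_of_bound 0 1 _ 1 ?_ (fun w => ?_)
      · exact ((continuous_const.sub ((continuous_tanh.comp
          (continuous_const.add (continuous_const.mul continuous_id))).pow 2)).pow
            2).aestronglyMeasurable
      · rw [abs_of_nonneg (sq_nonneg _)]
        have h1 := one_sub_tanh_sq_bounds (γ + Real.sqrt γ * w)
        nlinarith [h1.1, h1.2]
    · exact integrable_const 1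
    · intro w
      dsimp only
      have h1 := one_sub_tanh_sq_bounds (γ + Real.sqrt γ * w)
      nlinarith [h1.1, h1.2]
  simpa using h

lemma abs_a_le (x : ℝ) : |2 * Real.tanh x * (1 - Real.tanh x ^ 2)| ≤ 2 := by
  have h1 := abs_tanh_le_one x
  have h2 := one_sub_tanh_sq_bounds x
  rw [abs_mul, abs_mul, abs_of_nonneg h2.1.le, abs_two]
  nlinarith [abs_nonneg (Real.tanh x)]

lemma abs_b_le (x : ℝ) : |2 * (1 - Real.tanh x ^ 2) * (1 - 3 * Real.tanh x ^ 2)| ≤ 8 := by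
  have h1 := tanh_sq_lt_one x
  have h2 := sq_nonneg (Real.tanh x)
  rw [abs_le]
  constructor <;> nlinarith

lemma hasDerivAt_a (x : ℝ) :
    HasDerivAt (fun y => 2 * Real.tanh y * (1 - Real.tanh y ^ 2))
      (2 * (1 - Real.tanh x ^ 2) * (1 - 3 * Real.tanh x ^ 2)) x := by
  have h1 := hasDerivAt_tanh x
  have h3 : HasDerivAt (fun y => 1 - Real.tanh y ^ 2)
      (-(2 * Real.tanh x * (1 - Real.tanh x ^ 2))) x := by
    have h := (h1.pow 2).const_sub 1
    refine h.congr_deriv ?_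
    push_cast
    ring
  have h4 := (h1.const_mul 2).mul h3
  refine h4.congr_deriv ?_
  ring

lemma continuous_a : Continuous (fun y => 2 * Real.tanh y * (1 - Real.tanh y ^ 2)) :=
  (continuous_const.mul continuous_tanh).mul
    (continuous_const.sub (continuous_tanh.pow 2))

lemma continuous_b : Continuous (fun y => 2 * (1 - Real.tanh y ^ 2) * (1 - 3 * Real.tanh y ^ 2)) :=
  (continuous_const.mul (continuous_const.sub (continuous_tanh.pow 2))).mul
    (continuous_const.sub (continuous_const.mul (continuous_tanh.pow 2)))

lemma cont_aff (γ : ℝ) : Continuous (fun w : ℝ => γ + Real.sqrt γ * w) :=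
  continuous_const.add (continuous_const.mul continuous_id)

lemma hasDerivAt_Fg {γ₀ : ℝ} (hγ₀ : 0 < γ₀) : HasDerivAt Fg (Dg γ₀) γ₀ := by
  have hs0 : 0 < Real.sqrt γ₀ := Real.sqrt_pos.2 hγ₀
  have hs20 : 0 < Real.sqrt (γ₀ / 2) := Real.sqrt_pos.2 (by linarith)
  -- Step 1: differentiation under the integral sign
  have main := hasDerivAt_integral_of_dominated_loc_of_deriv_le
    (μ := gaussianReal 0 1)
    (F := fun γ (w : ℝ) => Real.tanh (γ + Real.sqrt γ * w) ^ 2)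
    (F' := fun γ (w : ℝ) =>
      2 * Real.tanh (γ + Real.sqrt γ * w) * (1 - Real.tanh (γ + Real.sqrt γ * w) ^ 2)
        * (1 + w / (2 * Real.sqrt γ)))
    (x₀ := γ₀) (s := Metric.ball γ₀ (γ₀ / 2)) (bound := fun w => 2 + |w| / Real.sqrt (γ₀ / 2))
    (Metric.ball_mem_nhds _ (by linarith))
    (Eventually.of_forall fun γ =>
      ((continuous_tanh.comp (cont_aff γ)).pow 2).aestronglyMeasurable)
    (integrable_gaussianReal_of_bound 0 1 _ 1
      ((continuous_tanh.comp (cont_aff γ₀)).pow 2).aestronglyMeasurable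
      (fun w => by rw [abs_of_nonneg (sq_nonneg _)]; exact (tanh_sq_lt_one _).le))
    (by
      apply Continuous.aestronglyMeasurable
      exact ((continuous_const.mul (continuous_tanh.comp (cont_aff γ₀))).mul
        (continuous_const.sub ((continuous_tanh.comp (cont_aff γ₀)).pow 2))).mul
        (continuous_const.add (continuous_id.div_const _)))
    (ae_of_all _ fun w γ hγ => by
      have hγpos : γ₀ / 2 < γ := by
        have h := abs_lt.1 (by simpa [Real.dist_eq] using hγ)
        linarith [h.1]
      have hsγ : Real.sqrt (γ₀ / 2) ≤ Real.sqrt γ := Real.sqrt_le_sqrt (by linarith)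
      have hsγ0 : 0 < Real.sqrt γ := lt_of_lt_of_le hs20 hsγ
      have h1 : |1 + w / (2 * Real.sqrt γ)| ≤ 1 + |w| / (2 * Real.sqrt (γ₀ / 2)) := by
        refine (abs_add_le _ _).trans ?_
        rw [abs_one, abs_div]
        gcongr
        rw [abs_of_pos (by linarith : (0:ℝ) < 2 * Real.sqrt γ)]
        linarith
      calc ‖2 * Real.tanh (γ + Real.sqrt γ * w) * (1 - Real.tanh (γ + Real.sqrt γ * w) ^ 2)
            * (1 + w / (2 * Real.sqrt γ))‖
          = |2 * Real.tanh (γ + Real.sqrt γ * w) * (1 - Real.tanh (γ + Real.sqrt γ * w) ^ 2)|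
            * |1 + w / (2 * Real.sqrt γ)| := by rw [Real.norm_eq_abs, abs_mul]
        _ ≤ 2 * (1 + |w| / (2 * Real.sqrt (γ₀ / 2))) :=
            mul_le_mul (abs_a_le _) h1 (abs_nonneg _) (by norm_num)
        _ = 2 + |w| / Real.sqrt (γ₀ / 2) := by field_simp)
    (by
      have habs : Integrable (fun w : ℝ => |w| / Real.sqrt (γ₀ / 2)) (gaussianReal 0 1) :=
        integrable_abs_gaussian.div_const _
      simpa using (integrable_const (2:ℝ)).add habs)
    (ae_of_all _ fun w γ hγ => by
      have hγpos : γ₀ / 2 < γ := by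
        have h := abs_lt.1 (by simpa [Real.dist_eq] using hγ)
        linarith [h.1]
      have hγ0 : (0:ℝ) < γ := by linarith
      have hinner : HasDerivAt (fun γ : ℝ => γ + Real.sqrt γ * w)
          (1 + 1 / (2 * Real.sqrt γ) * w) γ :=
        (hasDerivAt_id γ).add ((Real.hasDerivAt_sqrt hγ0.ne').mul_const w)
      have houter := (hasDerivAt_tanh (γ + Real.sqrt γ * w)).comp γ hinner
      have hpow := houter.pow 2
      refine hpow.congr_deriv ?_
      simp only [Function.comp_apply]
      push_cast
      ring)
  -- Step 2: identify the derivative with Dg γ₀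
  have keyEq : (∫ w, 2 * Real.tanh (γ₀ + Real.sqrt γ₀ * w)
      * (1 - Real.tanh (γ₀ + Real.sqrt γ₀ * w) ^ 2)
      * (1 + w / (2 * Real.sqrt γ₀)) ∂(gaussianReal 0 1)) = Dg γ₀ := by
    -- integrability of the two pieces
    have Ia : Integrable (fun w => 2 * Real.tanh (γ₀ + Real.sqrt γ₀ * w)
        * (1 - Real.tanh (γ₀ + Real.sqrt γ₀ * w) ^ 2)) (gaussianReal 0 1) :=
      integrable_gaussianReal_of_bound 0 1 _ 2
        (continuous_a.comp (cont_aff γ₀)).aestronglyMeasurable (fun w => abs_a_le _)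
    have Iwg : Integrable (fun w => w * (2 * Real.tanh (γ₀ + Real.sqrt γ₀ * w)
        * (1 - Real.tanh (γ₀ + Real.sqrt γ₀ * w) ^ 2))) (gaussianReal 0 1) := by
      refine (integrable_abs_gaussian.const_mul 2).mono'
        (continuous_id.mul (continuous_a.comp (cont_aff γ₀))).aestronglyMeasurable
        (ae_of_all _ fun w => ?_)
      rw [Real.norm_eq_abs, abs_mul]
      calc |w| * |2 * Real.tanh (γ₀ + Real.sqrt γ₀ * w)
            * (1 - Real.tanh (γ₀ + Real.sqrt γ₀ * w) ^ 2)| ≤ |w| * 2 :=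
            mul_le_mul_of_nonneg_left (abs_a_le _) (abs_nonneg w)
        _ = 2 * |w| := by ring
    -- split off the w-part
    have E1 : (∫ w, 2 * Real.tanh (γ₀ + Real.sqrt γ₀ * w)
        * (1 - Real.tanh (γ₀ + Real.sqrt γ₀ * w) ^ 2)
        * (1 + w / (2 * Real.sqrt γ₀)) ∂(gaussianReal 0 1))
        = (∫ w, 2 * Real.tanh (γ₀ + Real.sqrt γ₀ * w)
            * (1 - Real.tanh (γ₀ + Real.sqrt γ₀ * w) ^ 2) ∂(gaussianReal 0 1))
          + (2 * Real.sqrt γ₀)⁻¹ * ∫ w, w * (2 * Real.tanh (γ₀ + Real.sqrt γ₀ * w)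
            * (1 - Real.tanh (γ₀ + Real.sqrt γ₀ * w) ^ 2)) ∂(gaussianReal 0 1) := by
      rw [← integral_const_mul, ← integral_add Ia (Iwg.const_mul _)]
      congr 1; funext w
      field_simp
    -- Stein's identity
    have hgd : ∀ w, HasDerivAt (fun w => 2 * Real.tanh (γ₀ + Real.sqrt γ₀ * w)
        * (1 - Real.tanh (γ₀ + Real.sqrt γ₀ * w) ^ 2))
        (Real.sqrt γ₀ * (2 * (1 - Real.tanh (γ₀ + Real.sqrt γ₀ * w) ^ 2)
          * (1 - 3 * Real.tanh (γ₀ + Real.sqrt γ₀ * w) ^ 2))) w := by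
      intro w
      have hinner : HasDerivAt (fun w : ℝ => γ₀ + Real.sqrt γ₀ * w) (Real.sqrt γ₀) w := by
        simpa using ((hasDerivAt_id w).const_mul (Real.sqrt γ₀)).const_add γ₀
      have h := (hasDerivAt_a (γ₀ + Real.sqrt γ₀ * w)).comp w hinner
      refine h.congr_deriv ?_
      ring
    have hstein := stein _ _ hgd
      (continuous_const.mul (continuous_b.comp (cont_aff γ₀)))
      2 (Real.sqrt γ₀ * 8) (fun w => abs_a_le _)
      (fun w => by
        rw [abs_mul, abs_of_pos hs0]
        exact mul_le_mul_of_nonneg_left (abs_b_le _) hs0.le)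
    -- pass to the explicit Gaussian density on ℝ
    have Sa := integral_shift γ₀ hγ₀ _ continuous_a.aestronglyMeasurable
    have Sb := integral_shift γ₀ hγ₀ _ continuous_b.aestronglyMeasurable
    have Sw := integral_shift γ₀ hγ₀ (fun x => (1 - Real.tanh x ^ 2) ^ 2)
      ((continuous_const.sub (continuous_tanh.pow 2)).pow 2).aestronglyMeasurable
    -- integrability at the density level
    set ρ : ℝ → ℝ := gaussianPDFReal γ₀ γ₀.toNNReal with hρ
    have hbnd1 : ∀ x : ℝ, |Real.tanh x * (1 - Real.tanh x ^ 2)| ≤ 1 := fun x => by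
      rw [abs_mul]
      have h1 := abs_tanh_le_one x
      have h2 := one_sub_tanh_sq_bounds x
      rw [abs_of_nonneg h2.1.le]
      nlinarith [abs_nonneg (Real.tanh x)]
    have hbnd2 : ∀ x : ℝ, |Real.tanh x ^ 2 * (1 - Real.tanh x ^ 2)| ≤ 1 := fun x => by
      rw [abs_mul, abs_of_nonneg (sq_nonneg _)]
      have h1 := tanh_sq_lt_one x
      have h2 := one_sub_tanh_sq_bounds x
      rw [abs_of_nonneg h2.1.le]
      nlinarith [sq_nonneg (Real.tanh x)]
    have hbndw : ∀ x : ℝ, |(1 - Real.tanh x ^ 2) ^ 2| ≤ 1 := fun x => by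
      rw [abs_of_nonneg (sq_nonneg _)]
      have h2 := one_sub_tanh_sq_bounds x
      nlinarith [h2.1, h2.2]
    have Iq : Integrable (fun x => ρ x * (Real.tanh x * (1 - Real.tanh x ^ 2))) volume :=
      integrable_pdf_mul _ _ _
        (continuous_tanh.mul (continuous_const.sub (continuous_tanh.pow 2))) 1 hbnd1
    have Ir : Integrable (fun x => ρ x * (Real.tanh x ^ 2 * (1 - Real.tanh x ^ 2))) volume :=
      integrable_pdf_mul _ _ _
        ((continuous_tanh.pow 2).mul (continuous_const.sub (continuous_tanh.pow 2))) 1 hbnd2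
    have Iw : Integrable (fun x => ρ x * (1 - Real.tanh x ^ 2) ^ 2) volume :=
      integrable_pdf_mul _ _ _
        ((continuous_const.sub (continuous_tanh.pow 2)).pow 2) 1 hbndw
    -- the density-level computation, using the Nishimori identity
    have E4 : (∫ x, ρ x * (2 * Real.tanh x * (1 - Real.tanh x ^ 2)))
        + (2 * Real.sqrt γ₀)⁻¹ * (Real.sqrt γ₀
          * ∫ x, ρ x * (2 * (1 - Real.tanh x ^ 2) * (1 - 3 * Real.tanh x ^ 2)))
        = ∫ x, ρ x * (1 - Real.tanh x ^ 2) ^ 2 := by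
      have c1 : (∫ x, ρ x * (2 * Real.tanh x * (1 - Real.tanh x ^ 2)))
          = 2 * ∫ x, ρ x * (Real.tanh x * (1 - Real.tanh x ^ 2)) := by
        rw [← integral_const_mul]
        congr 1; funext x; ring
      have c2 : (∫ x, ρ x * (2 * (1 - Real.tanh x ^ 2) * (1 - 3 * Real.tanh x ^ 2)))
          = 2 * ((∫ x, ρ x * (1 - Real.tanh x ^ 2) ^ 2)
            - 2 * ∫ x, ρ x * (Real.tanh x ^ 2 * (1 - Real.tanh x ^ 2))) := by
        rw [← integral_const_mul, ← integral_sub Iw (Ir.const_mul 2), ← integral_const_mul]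
        congr 1; funext x; ring
      rw [c1, c2, nishimori γ₀ hγ₀]
      have hss : (2 * Real.sqrt γ₀)⁻¹ * Real.sqrt γ₀ = 1/2 := by
        field_simp
      calc 2 * (∫ x, ρ x * (Real.tanh x ^ 2 * (1 - Real.tanh x ^ 2)))
            + (2 * Real.sqrt γ₀)⁻¹ * (Real.sqrt γ₀ * (2 * ((∫ x, ρ x * (1 - Real.tanh x ^ 2) ^ 2)
              - 2 * ∫ x, ρ x * (Real.tanh x ^ 2 * (1 - Real.tanh x ^ 2)))))
          = 2 * (∫ x, ρ x * (Real.tanh x ^ 2 * (1 - Real.tanh x ^ 2)))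
            + (1/2) * (2 * ((∫ x, ρ x * (1 - Real.tanh x ^ 2) ^ 2)
              - 2 * ∫ x, ρ x * (Real.tanh x ^ 2 * (1 - Real.tanh x ^ 2)))) := by
            rw [← mul_assoc, hss]
        _ = ∫ x, ρ x * (1 - Real.tanh x ^ 2) ^ 2 := by ring
    rw [E1, hstein, integral_const_mul, Sa, Sb, E4, ← Sw]
    rfl
  rw [← keyEq]
  exact main.2

lemma Fg_pos {γ : ℝ} (hγ : 0 < γ) : 0 < Fg γ := by
  have hs : 0 < Real.sqrt γ := Real.sqrt_pos.2 hγ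
  rcases lt_or_ge 0 (Fg γ) with h | h
  · exact h
  exfalso
  have h0 : Fg γ = 0 := le_antisymm h (Fg_nonneg γ)
  have hint : Integrable (fun w => Real.tanh (γ + Real.sqrt γ * w) ^ 2) (gaussianReal 0 1) :=
    integrable_gaussianReal_of_bound 0 1 _ 1
      ((continuous_tanh.comp (cont_aff γ)).pow 2).aestronglyMeasurable
      (fun w => by rw [abs_of_nonneg (sq_nonneg _)]; exact (tanh_sq_lt_one _).le)
  have hz : (fun w => Real.tanh (γ + Real.sqrt γ * w) ^ 2) =ᵐ[gaussianReal 0 1] 0 :=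
    (integral_eq_zero_iff_of_nonneg (fun w => sq_nonneg _) hint).1 h0
  have hsing : ∀ᵐ w ∂(gaussianReal 0 1), w ≠ -Real.sqrt γ := by
    have h1 : (gaussianReal 0 1) {-Real.sqrt γ} = 0 :=
      gaussianReal_absolutelyContinuous 0 one_ne_zero (measure_singleton _)
    rw [ae_iff]
    convert h1 using 2
    ext w
    simp
  have : (ae (gaussianReal 0 1)).NeBot := IsProbabilityMeasure.ae_neBot
  obtain ⟨w, h1, h2⟩ := (hz.and hsing).exists
  have harg : γ + Real.sqrt γ * w ≠ 0 := by
    intro heq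
    apply h2
    have hss : Real.sqrt γ * Real.sqrt γ = γ := Real.mul_self_sqrt hγ.le
    have : Real.sqrt γ * w = Real.sqrt γ * (-Real.sqrt γ) := by nlinarith
    exact mul_left_cancel₀ hs.ne' this
  have h1' : Real.tanh (γ + Real.sqrt γ * w) ^ 2 = 0 := by simpa using h1
  exact tanh_ne_zero harg (pow_eq_zero_iff two_ne_zero |>.1 h1')

lemma Fg_monoOn : MonotoneOn Fg (Ioi (0:ℝ)) := by
  refine monotoneOn_of_deriv_nonneg (convex_Ioi 0)
    (fun x hx => (hasDerivAt_Fg hx).continuousAt.continuousWithinAt)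
    (fun x hx => (hasDerivAt_Fg (by simpa using hx)).differentiableAt.differentiableWithinAt)
    (fun x hx => ?_)
  rw [(hasDerivAt_Fg (by simpa using hx)).deriv]
  exact Dg_nonneg x

lemma Fg_lipOn : MonotoneOn (fun x => x - Fg x) (Ioi (0:ℝ)) := by
  refine monotoneOn_of_deriv_nonneg (convex_Ioi 0)
    (fun x hx => ((continuousAt_id.sub (hasDerivAt_Fg hx).continuousAt)).continuousWithinAt)
    (fun x hx => (((hasDerivAt_id x).sub
      (hasDerivAt_Fg (by simpa using hx))).differentiableAt.differentiableWithinAt))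
    (fun x hx => ?_)
  have hd : HasDerivAt (fun x => x - Fg x) (1 - Dg x) x :=
    (hasDerivAt_id x).sub (hasDerivAt_Fg (by simpa using hx))
  rw [hd.deriv]
  simpa using Dg_le_one x

end Stmt8aux
end

/-- `mmse(γ) = 1 - E[tanh(γ + √γ W)²]` with `W ∼ N(0,1)`. -/
noncomputable def mmseFn (γ : ℝ) : ℝ :=
  1 - ∫ w, Real.tanh (γ + Real.sqrt γ * w) ^ 2 ∂(gaussianReal 0 1)

open Stmt8aux

/-- For `β ∈ (0,1)` and `t > 0`, the fixed point equation `γ = β²(1 - mmse(γ+t))` has a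
unique nonnegative solution `γ*`, and the iterates `γ₀ = 0`,
`γ_{k+1} = β²(1 - mmse(γ_k + t))` converge to it with
`1 - β^{2k} ≤ γ_k/γ* ≤ 1` for all `k`. -/
theorem stmt8 (β t : ℝ) (hβ : β ∈ Ioo (0 : ℝ) 1) (ht : 0 < t) :
    ∃ γs : ℝ, 0 ≤ γs ∧ γs = β ^ 2 * (1 - mmseFn (γs + t)) ∧
      (∀ γ' : ℝ, 0 ≤ γ' → γ' = β ^ 2 * (1 - mmseFn (γ' + t)) → γ' = γs) ∧
      ∀ gam : ℕ → ℝ, gam 0 = 0 →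
        (∀ k, gam (k + 1) = β ^ 2 * (1 - mmseFn (gam k + t))) →
        Tendsto gam atTop (nhds γs) ∧
          ∀ k, 1 - β ^ (2 * k) ≤ gam k / γs ∧ gam k / γs ≤ 1 := by
  obtain ⟨hβ0, hβ1⟩ := hβ
  have hb2 : 0 < β ^ 2 := by positivity
  have hb2' : β ^ 2 < 1 := by nlinarith
  set f : ℝ → ℝ := fun γ => β ^ 2 * Fg (γ + t) with hf
  have hre : ∀ γ : ℝ, β ^ 2 * (1 - mmseFn (γ + t)) = f γ := fun γ => by
    rw [hf]
    dsimp only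
    rw [mmseFn, Fg]
    ring
  have hfmono : ∀ a b : ℝ, 0 ≤ a → a ≤ b → f a ≤ f b := fun a b ha hab => by
    rw [hf]
    dsimp only
    refine mul_le_mul_of_nonneg_left ?_ hb2.le
    exact Fg_monoOn (by simp; linarith) (by simp; linarith) (by linarith)
  have hflip : ∀ a b : ℝ, 0 ≤ a → a ≤ b → f b - f a ≤ β ^ 2 * (b - a) := fun a b ha hab => by
    rw [hf]
    dsimp only
    have h := Fg_lipOn (a := a + t) (b := b + t) (by simp; linarith) (by simp; linarith)
      (by linarith)
    have h2 : Fg (b + t) - Fg (a + t) ≤ b - a := by dsimp at h; linarith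
    nlinarith
  have hfnonneg : ∀ γ : ℝ, 0 ≤ f γ := fun γ => mul_nonneg hb2.le (Fg_nonneg _)
  have hfle : ∀ γ : ℝ, f γ ≤ β ^ 2 := fun γ => by
    rw [hf]; dsimp only
    nlinarith [Fg_le_one (γ + t)]
  have hfpos : ∀ γ : ℝ, 0 ≤ γ → 0 < f γ := fun γ hγ => by
    rw [hf]; dsimp only
    exact mul_pos hb2 (Fg_pos (by linarith))
  have hfcont : ContinuousOn f (Icc 0 (β ^ 2)) := by
    intro x hx
    have hx0 : (0:ℝ) < x + t := by
      have := hx.1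
      linarith
    have hc : ContinuousAt f x := by
      have h1 : ContinuousAt (fun γ : ℝ => Fg (γ + t)) x :=
        (hasDerivAt_Fg hx0).continuousAt.comp (f := fun γ : ℝ => γ + t) (continuous_add_right t).continuousAt
      exact h1.const_mul _
    exact hc.continuousWithinAt
  -- existence of a fixed point via IVT
  have hIVT : ∃ γs ∈ Icc (0:ℝ) (β ^ 2), f γs - γs = 0 := by
    have hcont : ContinuousOn (fun x => f x - x) (Icc 0 (β ^ 2)) :=
      hfcont.sub continuousOn_id
    have hmem : (0:ℝ) ∈ Icc (f (β ^ 2) - β ^ 2) (f 0 - 0) := by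
      constructor
      · linarith [hfle (β ^ 2)]
      · simpa using (hfpos 0 le_rfl).le
    have := intermediate_value_Icc' (by positivity : (0:ℝ) ≤ β ^ 2) hcont hmem
    obtain ⟨γs, hmem', heq⟩ := this
    exact ⟨γs, hmem', heq⟩
  obtain ⟨γs, hγsmem, hγseq⟩ := hIVT
  have hfix : f γs = γs := by linarith
  have hγs0 : 0 ≤ γs := hγsmem.1
  have hγspos : 0 < γs := by
    rw [← hfix]
    exact hfpos γs hγs0
  refine ⟨γs, hγs0, ?_, ?_, ?_⟩
  · rw [hre γs, hfix]
  · -- uniqueness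
    intro γ' hγ' heq'
    have hfix' : f γ' = γ' := by rw [hre γ'] at heq'; linarith
    rcases le_total γ' γs with h | h
    · have := hflip γ' γs hγ' h
      rw [hfix, hfix'] at this
      nlinarith
    · have := hflip γs γ' hγs0 h
      rw [hfix, hfix'] at this
      nlinarith
  · intro gam h0 hrec
    have hrec' : ∀ k, gam (k + 1) = f (gam k) := fun k => by rw [hrec k, hre]
    have hnonneg : ∀ k, 0 ≤ gam k := by
      intro k
      induction k with
      | zero => rw [h0]
      | succ n _ => rw [hrec' n]; exact hfnonneg _
    have hle : ∀ k, gam k ≤ γs := by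
      intro k
      induction k with
      | zero => rw [h0]; exact hγs0
      | succ n ih =>
        rw [hrec' n, ← hfix]
        exact hfmono _ _ (hnonneg n) ih
    have hgap : ∀ k, γs - gam k ≤ β ^ (2 * k) * γs := by
      intro k
      induction k with
      | zero => simpa [h0] using le_refl γs
      | succ n ih =>
        have h1 : γs - gam (n + 1) ≤ β ^ 2 * (γs - gam n) := by
          have hfl := hflip (gam n) γs (hnonneg n) (hle n)
          rw [hfix] at hfl
          rw [hrec' n]
          linarith
        have h2 : β ^ 2 * (γs - gam n) ≤ β ^ 2 * (β ^ (2 * n) * γs) :=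
          mul_le_mul_of_nonneg_left ih hb2.le
        have h3 : β ^ 2 * (β ^ (2 * n) * γs) = β ^ (2 * (n + 1)) * γs := by
          rw [show 2 * (n + 1) = 2 * n + 2 by ring, pow_add]
          ring
        linarith
    constructor
    · -- convergence
      have hpow : Tendsto (fun k : ℕ => β ^ (2 * k) * γs) atTop (nhds 0) := by
        have h1 : Tendsto (fun k : ℕ => (β ^ 2) ^ k) atTop (nhds 0) :=
          tendsto_pow_atTop_nhds_zero_of_lt_one hb2.le hb2'
        have h2 := h1.mul_const γs
        rw [zero_mul] at h2
        refine h2.congr fun k => ?_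
        rw [← pow_mul]
      have hlow : Tendsto (fun k : ℕ => γs - β ^ (2 * k) * γs) atTop (nhds γs) := by
        have := tendsto_const_nhds (x := γs) (f := atTop (α := ℕ)) |>.sub hpow
        simpa using this
      exact tendsto_of_tendsto_of_tendsto_of_le_of_le hlow tendsto_const_nhds
        (fun k => by linarith [hgap k]) (fun k => hle k)
    · intro k
      constructor
      · rw [le_div_iff₀ hγspos]
        nlinarith [hgap k]
      · rw [div_le_one hγspos]
        exact hle k
end

section
/- Fix β ∈ (0,1). Let γ*(β,t) be the unique non-negative solution of γ* = β²(1 - mmse(γ* + t)) for t > 0. Then for any t₁, t₂ > 0, |γ*(β,t₁) - γ*(β,t₂)| ≤ (β²/(1-β²)) |t₁ - t₂|. -/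
open MeasureTheory ProbabilityTheory Set Filter

namespace Stmt9Aux


lemma tanh_sq_le_one (x : ℝ) : Real.tanh x ^ 2 ≤ 1 := by
  have hc := Real.cosh_pos x
  have h1 : Real.sinh x ^ 2 ≤ Real.cosh x ^ 2 := by
    have := Real.cosh_sq_sub_sinh_sq x; nlinarith
  rw [Real.tanh_eq_sinh_div_cosh, div_pow]
  rw [div_le_one (by positivity)]
  exact h1

lemma abs_tanh_le_one (x : ℝ) : |Real.tanh x| ≤ 1 := by
  have := tanh_sq_le_one x
  nlinarith [abs_nonneg (Real.tanh x), sq_abs (Real.tanh x)]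

lemma hasDerivAt_tanh (x : ℝ) : HasDerivAt Real.tanh (1 - Real.tanh x ^ 2) x := by
  have hc := (Real.cosh_pos x).ne'
  have h := (Real.hasDerivAt_sinh x).div (Real.hasDerivAt_cosh x) hc
  have heq : (Real.cosh x * Real.cosh x - Real.sinh x * Real.sinh x) / Real.cosh x ^ 2
      = 1 - Real.tanh x ^ 2 := by
    rw [Real.tanh_eq_sinh_div_cosh, div_pow]
    field_simp
  rw [heq] at h
  exact h.congr_of_eventuallyEq (Eventually.of_forall fun y => (Real.tanh_eq_sinh_div_cosh y))

/-- standard gaussian density -/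
noncomputable def phi (w : ℝ) : ℝ := (Real.sqrt (2 * Real.pi))⁻¹ * Real.exp (-(w ^ 2) / 2)

lemma phi_nonneg (w : ℝ) : 0 ≤ phi w := by unfold phi; positivity

lemma gaussianPDFReal_eq_phi : gaussianPDFReal 0 1 = phi := by
  ext w
  simp only [gaussianPDFReal, phi, NNReal.coe_one, mul_one, sub_zero]

lemma continuous_phi : Continuous phi := by
  unfold phi; fun_prop

lemma gauss_integral_eq (f : ℝ → ℝ) :
    ∫ w, f w ∂(gaussianReal 0 1) = ∫ w, phi w * f w := by
  rw [gaussianReal_of_var_ne_zero _ one_ne_zero]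
  have : gaussianPDF 0 1 = fun x => (((phi x).toNNReal : NNReal) : ENNReal) := by
    ext x
    rw [gaussianPDF, gaussianPDFReal_eq_phi, ENNReal.ofReal]
  rw [this, integral_withDensity_eq_integral_smul
    (continuous_phi.measurable.real_toNNReal) f]
  congr 1; ext w
  simp [NNReal.smul_def, Real.coe_toNNReal _ (phi_nonneg w)]

lemma gauss_integrable_iff (f : ℝ → ℝ) :
    Integrable f (gaussianReal 0 1) ↔ Integrable (fun w => phi w * f w) := by
  rw [gaussianReal_of_var_ne_zero _ one_ne_zero]
  have : gaussianPDF 0 1 = fun x => (((phi x).toNNReal : NNReal) : ENNReal) := by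
    ext x
    rw [gaussianPDF, gaussianPDFReal_eq_phi, ENNReal.ofReal]
  rw [this, integrable_withDensity_iff_integrable_smul
    (continuous_phi.measurable.real_toNNReal)]
  constructor <;> intro h <;> refine h.congr (Eventually.of_forall fun w => ?_) <;>
    simp [NNReal.smul_def, Real.coe_toNNReal _ (phi_nonneg w)]





lemma abs_mul_exp_le (w : ℝ) : |w| * Real.exp (-(4⁻¹) * w ^ 2) ≤ 2 := by
  have h1 := Real.add_one_le_exp (4⁻¹ * w ^ 2)
  have h2 : Real.exp (-(4⁻¹) * w ^ 2) = (Real.exp (4⁻¹ * w ^ 2))⁻¹ := by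
    rw [← Real.exp_neg]; ring_nf
  have h3 : (0:ℝ) < Real.exp (4⁻¹ * w ^ 2) := Real.exp_pos _
  rw [h2]
  rw [mul_inv_le_iff₀ h3]
  nlinarith [sq_nonneg (|w| - 2), sq_abs w, abs_nonneg w]

lemma integrable_phi_mul {k : ℝ → ℝ} (hk : AEStronglyMeasurable k (volume : Measure ℝ))
    {a b : ℝ} (ha : 0 ≤ a) (hbn : 0 ≤ b) (hb : ∀ w, |k w| ≤ a + b * |w|) :
    Integrable (fun w => phi w * k w) (volume : Measure ℝ) := by
  have hint : Integrable (fun w : ℝ =>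
      (Real.sqrt (2 * Real.pi))⁻¹ * (a + 2 * b) * Real.exp (-(4⁻¹) * w ^ 2))
      (volume : Measure ℝ) :=
    (integrable_exp_neg_mul_sq (by norm_num)).const_mul _
  refine hint.mono' (continuous_phi.aestronglyMeasurable.mul hk)
    (Eventually.of_forall fun w => ?_)
  have hexp : Real.exp (-(w ^ 2) / 2) =
      Real.exp (-(4⁻¹) * w ^ 2) * Real.exp (-(4⁻¹) * w ^ 2) := by
    rw [← Real.exp_add]; ring_nf
  have h0 : (0:ℝ) ≤ (Real.sqrt (2 * Real.pi))⁻¹ := by positivity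
  have he : (0:ℝ) < Real.exp (-(4⁻¹) * w ^ 2) := Real.exp_pos _
  have he1 : Real.exp (-(4⁻¹) * w ^ 2) ≤ 1 := by
    rw [Real.exp_le_one_iff]; nlinarith [sq_nonneg w]
  rw [Real.norm_eq_abs, abs_mul, abs_of_nonneg (phi_nonneg w)]
  have hkb := hb w
  have key : Real.exp (-(w ^ 2) / 2) * |k w| ≤ (a + 2 * b) * Real.exp (-(4⁻¹) * w ^ 2) := by
    rw [hexp]
    have h5 : Real.exp (-(4⁻¹) * w ^ 2) * |k w|
        ≤ a + 2 * b := by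
      calc Real.exp (-(4⁻¹) * w ^ 2) * |k w|
          ≤ Real.exp (-(4⁻¹) * w ^ 2) * (a + b * |w|) :=
            mul_le_mul_of_nonneg_left hkb he.le
        _ = a * Real.exp (-(4⁻¹) * w ^ 2) + b * (|w| * Real.exp (-(4⁻¹) * w ^ 2)) := by ring
        _ ≤ a * 1 + b * 2 := by
            gcongr
            exact abs_mul_exp_le w
        _ = a + 2 * b := by ring
    calc Real.exp (-(4⁻¹) * w ^ 2) * Real.exp (-(4⁻¹) * w ^ 2) * |k w|
        = Real.exp (-(4⁻¹) * w ^ 2) * (Real.exp (-(4⁻¹) * w ^ 2) * |k w|) := by ring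
      _ ≤ Real.exp (-(4⁻¹) * w ^ 2) * (a + 2 * b) := mul_le_mul_of_nonneg_left h5 he.le
      _ = (a + 2 * b) * Real.exp (-(4⁻¹) * w ^ 2) := by ring
  calc (Real.sqrt (2 * Real.pi))⁻¹ * Real.exp (-(w ^ 2) / 2) * |k w|
      = (Real.sqrt (2 * Real.pi))⁻¹ * (Real.exp (-(w ^ 2) / 2) * |k w|) := by ring
    _ ≤ (Real.sqrt (2 * Real.pi))⁻¹ * ((a + 2 * b) * Real.exp (-(4⁻¹) * w ^ 2)) :=
        mul_le_mul_of_nonneg_left key h0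
    _ = (Real.sqrt (2 * Real.pi))⁻¹ * (a + 2 * b) * Real.exp (-(4⁻¹) * w ^ 2) := by ring





lemma hasDerivAt_phi (w : ℝ) : HasDerivAt phi (-w * phi w) w := by
  have h1 : HasDerivAt (fun w : ℝ => -(w ^ 2) / 2) (-w) w := by
    have := ((hasDerivAt_pow 2 w).neg).div_const 2
    simpa using this.congr_deriv (by ring)
  have h2 := (h1.exp).const_mul (Real.sqrt (2 * Real.pi))⁻¹
  refine h2.congr_deriv ?_
  unfold phi; ring

lemma tendsto_phi_atTop : Tendsto phi atTop (nhds 0) := by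
  have h1 : Tendsto (fun w : ℝ => -(w ^ 2) / 2) atTop atBot := by
    apply Tendsto.atBot_div_const (by norm_num)
    exact tendsto_neg_atTop_atBot.comp (tendsto_pow_atTop two_ne_zero)
  have h2 := (Real.tendsto_exp_atBot.comp h1).const_mul (Real.sqrt (2 * Real.pi))⁻¹
  rw [mul_zero] at h2
  exact h2

lemma tendsto_phi_atBot : Tendsto phi atBot (nhds 0) := by
  have h0 : Tendsto (fun w : ℝ => -w) atBot atTop := tendsto_neg_atBot_atTop
  have := tendsto_phi_atTop.comp h0
  refine this.congr fun w => ?_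
  simp [phi, Function.comp, neg_sq]

/-- Gaussian integration by parts: `∫ w k(w) φ(w) = ∫ k'(w) φ(w)`. -/
lemma gauss_ibp {k k' : ℝ → ℝ} (hk' : Continuous k')
    (hderiv : ∀ w, HasDerivAt k (k' w) w)
    {C C' : ℝ} (hC : 0 ≤ C) (hC' : 0 ≤ C')
    (hkb : ∀ w, |k w| ≤ C) (hk'b : ∀ w, |k' w| ≤ C') :
    ∫ w, phi w * (w * k w) = ∫ w, phi w * k' w := by
  have hkc : Continuous k := by
    rw [continuous_iff_continuousAt]; exact fun w => (hderiv w).continuousAt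
  set m : ℝ → ℝ := fun w => phi w * k w with hm
  set m' : ℝ → ℝ := fun w => phi w * (k' w - w * k w) with hm'
  have hmderiv : ∀ w, HasDerivAt m (m' w) w := by
    intro w
    have := (hasDerivAt_phi w).mul (hderiv w)
    refine this.congr_deriv ?_
    simp only [hm']; ring
  have hm'int : Integrable m' (volume : Measure ℝ) := by
    refine integrable_phi_mul ((hk'.sub (continuous_id.mul hkc)).aestronglyMeasurable)
      hC' hC fun w => ?_
    calc |k' w - w * k w| ≤ |k' w| + |w * k w| := abs_sub _ _
      _ ≤ C' + C * |w| := by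
          rw [abs_mul]
          have h1 := hk'b w
          have h2 : |w| * |k w| ≤ |w| * C := mul_le_mul_of_nonneg_left (hkb w) (abs_nonneg w)
          nlinarith [abs_nonneg w]
  have hmtop : Tendsto m atTop (nhds 0) := by
    apply squeeze_zero_norm (a := fun w => C * phi w)
    · intro w
      rw [Real.norm_eq_abs, hm, abs_mul, abs_of_nonneg (phi_nonneg w), mul_comm]
      exact mul_le_mul_of_nonneg_right (hkb w) (phi_nonneg w)
    · simpa using tendsto_phi_atTop.const_mul C
  have hmbot : Tendsto m atBot (nhds 0) := by
    apply squeeze_zero_norm (a := fun w => C * phi w)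
    · intro w
      rw [Real.norm_eq_abs, hm, abs_mul, abs_of_nonneg (phi_nonneg w), mul_comm]
      exact mul_le_mul_of_nonneg_right (hkb w) (phi_nonneg w)
    · simpa using tendsto_phi_atBot.const_mul C
  have hIoi : ∫ w in Ioi (0:ℝ), m' w = 0 - m 0 :=
    integral_Ioi_of_hasDerivAt_of_tendsto (hmderiv 0).continuousAt.continuousWithinAt
      (fun x _ => hmderiv x) hm'int.integrableOn hmtop
  have hIic : ∫ w in Iic (0:ℝ), m' w = m 0 - 0 :=
    integral_Iic_of_hasDerivAt_of_tendsto (hmderiv 0).continuousAt.continuousWithinAt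
      (fun x _ => hmderiv x) hm'int.integrableOn hmbot
  have htot : ∫ w, m' w = 0 := by
    rw [← intervalIntegral.integral_Iic_add_Ioi hm'int.integrableOn hm'int.integrableOn, hIoi, hIic]
    ring
  have hint1 : Integrable (fun w => phi w * k' w) (volume : Measure ℝ) :=
    integrable_phi_mul hk'.aestronglyMeasurable hC' le_rfl
      (fun w => by simpa using (hk'b w).trans (by linarith))
  have hint2 : Integrable (fun w => phi w * (w * k w)) (volume : Measure ℝ) :=
    integrable_phi_mul ((continuous_id.mul hkc).aestronglyMeasurable) le_rfl hC
      (fun w => by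
        rw [abs_mul, mul_comm]
        simpa using mul_le_mul_of_nonneg_right (hkb w) (abs_nonneg w))
  have hsplit : ∫ w, m' w = (∫ w, phi w * k' w) - ∫ w, phi w * (w * k w) := by
    rw [← integral_sub hint1 hint2]
    congr 1; ext w; simp only [hm']; ring
  rw [hsplit] at htot
  linarith


lemma exp_neg_two_mul_tanh (x : ℝ) :
    Real.exp (-(2 * x)) * (1 + Real.tanh x) = 1 - Real.tanh x := by
  have hc := (Real.cosh_pos x).ne'
  rw [Real.tanh_eq_sinh_div_cosh]
  field_simp
  rw [Real.cosh_add_sinh, Real.cosh_sub_sinh, ← Real.exp_add]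
  ring_nf

lemma nishimori (γ : ℝ) (hγ : 0 ≤ γ) :
    ∫ w, phi w * (Real.tanh (γ + Real.sqrt γ * w) * (1 - Real.tanh (γ + Real.sqrt γ * w)) ^ 2
      * (1 + Real.tanh (γ + Real.sqrt γ * w))) = 0 := by
  set s := Real.sqrt γ with hs
  have hs2 : s ^ 2 = γ := Real.sq_sqrt hγ
  set f : ℝ → ℝ := fun w => phi w * (Real.tanh (γ + s * w) * (1 - Real.tanh (γ + s * w)) ^ 2
      * (1 + Real.tanh (γ + s * w))) with hf
  have key : ∀ w, f (-(w + 2 * s)) = - f w := by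
    intro w
    set x := γ + s * w with hx
    have harg : γ + s * (-(w + 2 * s)) = -x := by
      rw [hx]; ring_nf; nlinarith [hs2]
    have hphi : phi (-(w + 2 * s)) = phi w * Real.exp (-(2 * x)) := by
      simp only [phi]
      rw [mul_assoc, ← Real.exp_add]
      congr 2
      rw [hx]; nlinarith [hs2]
    rw [hf]
    simp only [harg, hphi, Real.tanh_neg]
    have hkey := exp_neg_two_mul_tanh x
    set t := Real.tanh x with ht
    have expand : Real.exp (-(2 * x)) * (-t * (1 - -t) ^ 2 * (1 + -t))
        = (Real.exp (-(2 * x)) * (1 + t)) * (-t * (1 + t) * (1 - t)) := by ring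
    calc phi w * Real.exp (-(2 * x)) * (-t * (1 - -t) ^ 2 * (1 + -t))
        = phi w * (Real.exp (-(2 * x)) * (-t * (1 - -t) ^ 2 * (1 + -t))) := by ring
      _ = phi w * ((Real.exp (-(2 * x)) * (1 + t)) * (-t * (1 + t) * (1 - t))) := by
            rw [expand]
      _ = phi w * ((1 - t) * (-t * (1 + t) * (1 - t))) := by rw [hkey]
      _ = -(phi w * (t * (1 - t) ^ 2 * (1 + t))) := by ring
  have h1 : ∫ w, f (-(w + 2 * s)) = ∫ w, f w := by
    have h2 : ∫ w, (fun v => f (-v)) (w + 2 * s) = ∫ w, f (-w) :=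
      integral_add_right_eq_self (fun v => f (-v)) (2 * s)
    have h3 : ∫ w, f (-w) = ∫ w, f w := integral_neg_eq_self f _
    calc ∫ w, f (-(w + 2 * s)) = ∫ w, f (-w) := h2
      _ = ∫ w, f w := h3
  have h4 : ∫ w, f (-(w + 2 * s)) = - ∫ w, f w := by
    rw [show (fun w => f (-(w + 2 * s))) = fun w => -(f w) from funext fun w => key w]
    exact integral_neg f
  have := h1.symm.trans h4
  linarith [this]


lemma integrable_gauss {f : ℝ → ℝ} (hf : Continuous f)
    {a b : ℝ} (ha : 0 ≤ a) (hbn : 0 ≤ b) (hb : ∀ w, |f w| ≤ a + b * |w|) :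
    Integrable f (gaussianReal 0 1) := by
  rw [gauss_integrable_iff]
  exact integrable_phi_mul hf.aestronglyMeasurable ha hbn hb

noncomputable def Gfun (γ : ℝ) : ℝ :=
  ∫ w, Real.tanh (γ + Real.sqrt γ * w) ^ 2 ∂(gaussianReal 0 1)

noncomputable def Dfun (γ w : ℝ) : ℝ :=
  (2 * Real.tanh (γ + Real.sqrt γ * w) - 2 * Real.tanh (γ + Real.sqrt γ * w) ^ 3)
    * (1 + w / (2 * Real.sqrt γ))

@[fun_prop] lemma continuous_tanh : Continuous Real.tanh := by
  rw [continuous_iff_continuousAt]; exact fun x => (hasDerivAt_tanh x).continuousAt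

lemma hasDerivAt_inner {x : ℝ} (hx : 0 < x) (w : ℝ) :
    HasDerivAt (fun y => y + Real.sqrt y * w) (1 + 1 / (2 * Real.sqrt x) * w) x :=
  (hasDerivAt_id x).add ((Real.hasDerivAt_sqrt hx.ne').mul_const w)

lemma hasDerivAt_F {x : ℝ} (hx : 0 < x) (w : ℝ) :
    HasDerivAt (fun y => Real.tanh (y + Real.sqrt y * w) ^ 2) (Dfun x w) x := by
  have h1 := (hasDerivAt_tanh (x + Real.sqrt x * w)).comp x (hasDerivAt_inner hx w)
  have h2 := h1.pow 2
  refine h2.congr_deriv ?_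
  have hs : Real.sqrt x ≠ 0 := (Real.sqrt_pos.mpr hx).ne'
  simp only [Function.comp_apply]
  unfold Dfun
  field_simp
  ring

lemma hasDerivAt_Gfun {γ : ℝ} (hγ : 0 < γ) :
    HasDerivAt Gfun (∫ w, Dfun γ w ∂(gaussianReal 0 1)) γ := by
  have hεpos : 0 < γ / 2 := by linarith
  have hsq2 : (0:ℝ) < Real.sqrt (γ / 2) := Real.sqrt_pos.mpr hεpos
  set bound : ℝ → ℝ := fun w => 4 + 2 * (Real.sqrt (γ / 2))⁻¹ * |w| with hbd
  have key := hasDerivAt_integral_of_dominated_loc_of_deriv_le (μ := gaussianReal 0 1)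
    (F := fun x w => Real.tanh (x + Real.sqrt x * w) ^ 2)
    (F' := fun x w => Dfun x w) (x₀ := γ) (bound := bound) (s := Metric.ball γ (γ / 2)) (Metric.ball_mem_nhds γ hεpos)
    ?_ ?_ ?_ ?_ ?_ ?_
  · exact key.2
  · refine Eventually.of_forall fun x => ?_
    exact (Continuous.aestronglyMeasurable (by fun_prop)).pow 2
  · refine integrable_gauss (a := 1) (b := 0) (by fun_prop) zero_le_one le_rfl fun w => ?_
    rw [abs_of_nonneg (sq_nonneg _)]
    simpa using tanh_sq_le_one (γ + Real.sqrt γ * w)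
  · apply Continuous.aestronglyMeasurable
    unfold Dfun; fun_prop
  · refine Eventually.of_forall fun w x hx => ?_
    have hxpos : γ / 2 < x := by
      have := abs_lt.mp (mem_ball_iff_norm.mp hx)
      linarith [this.1]
    have hsx : Real.sqrt (γ / 2) ≤ Real.sqrt x := Real.sqrt_le_sqrt (by linarith)
    have hsxpos : (0:ℝ) < Real.sqrt x := lt_of_lt_of_le hsq2 hsx
    set t := Real.tanh (x + Real.sqrt x * w) with ht
    have h1 : |2 * t - 2 * t ^ 3| ≤ 4 := by
      have := abs_tanh_le_one (x + Real.sqrt x * w)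
      have h2 := abs_le.mp this
      rw [abs_le]
      constructor <;> nlinarith [h2.1, h2.2, sq_nonneg (1 + t), sq_nonneg (1 - t)]
    have h3 : |1 + w / (2 * Real.sqrt x)| ≤ 1 + |w| / (2 * Real.sqrt x) := by
      refine (abs_add_le _ _).trans ?_
      rw [abs_div]
      gcongr
      · simp
      · rw [abs_of_pos (by positivity)]
    rw [Real.norm_eq_abs]
    simp only [Dfun]
    rw [abs_mul]
    calc |2 * t - 2 * t ^ 3| * |1 + w / (2 * Real.sqrt x)|
        ≤ 4 * (1 + |w| / (2 * Real.sqrt x)) := by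
          apply mul_le_mul h1 h3 (abs_nonneg _) (by norm_num)
      _ ≤ 4 + 2 * (Real.sqrt (γ / 2))⁻¹ * |w| := by
          have : |w| / (2 * Real.sqrt x) ≤ |w| / (2 * Real.sqrt (γ / 2)) := by
            apply div_le_div_of_nonneg_left (abs_nonneg w) (by positivity)
            linarith
          have h4 : |w| / (2 * Real.sqrt (γ / 2)) = 2⁻¹ * ((Real.sqrt (γ / 2))⁻¹ * |w|) := by
            rw [div_eq_mul_inv, mul_inv]; ring
          rw [h4] at this
          nlinarith [this]
  · exact integrable_gauss (a := 4) (b := 2 * (Real.sqrt (γ / 2))⁻¹) (by fun_prop)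
      (by norm_num) (by positivity) fun w => (abs_of_nonneg (by positivity)).le
  · exact Eventually.of_forall fun w x hx => by
      have hxpos : γ / 2 < x := by
        have := abs_lt.mp (mem_ball_iff_norm.mp hx)
        linarith [this.1]
      exact hasDerivAt_F (by linarith) w






lemma abs_k_le (t : ℝ) (ht : |t| ≤ 1) : |2 * t - 2 * t ^ 3| ≤ 4 := by
  have h2 := abs_le.mp ht
  rw [abs_le]
  constructor <;> nlinarith [h2.1, h2.2, sq_nonneg (1 + t), sq_nonneg (1 - t)]

lemma abs_k'_le (t : ℝ) (ht : |t| ≤ 1) : |(1 - t ^ 2) * (2 - 6 * t ^ 2)| ≤ 8 := by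
  have h2 := abs_le.mp ht
  have hsq : t ^ 2 ≤ 1 := by nlinarith [h2.1, h2.2]
  have hsq0 : 0 ≤ t ^ 2 := sq_nonneg t
  rw [abs_le]
  constructor <;> nlinarith

lemma abs_N_le (t : ℝ) (ht : |t| ≤ 1) : |t * (1 - t) ^ 2 * (1 + t)| ≤ 8 := by
  have h2 := abs_le.mp ht
  have h3 : |1 - t| ≤ 2 := by rw [abs_le]; constructor <;> linarith [h2.1, h2.2]
  have h4 : |1 + t| ≤ 2 := by rw [abs_le]; constructor <;> linarith [h2.1, h2.2]
  calc |t * (1 - t) ^ 2 * (1 + t)| = |t| * |1 - t| ^ 2 * |1 + t| := by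
        rw [abs_mul, abs_mul, abs_pow]
    _ ≤ 1 * 2 ^ 2 * 2 := by gcongr <;> positivity
    _ = 8 := by norm_num

lemma Dfun_integral_eq {γ : ℝ} (hγ : 0 < γ) :
    ∫ w, Dfun γ w ∂(gaussianReal 0 1)
      = ∫ w, (1 - Real.tanh (γ + Real.sqrt γ * w) ^ 2) ^ 2 ∂(gaussianReal 0 1) := by
  have hs : 0 < Real.sqrt γ := Real.sqrt_pos.mpr hγ
  set s := Real.sqrt γ with hsdef
  set k : ℝ → ℝ := fun w => 2 * Real.tanh (γ + s * w) - 2 * Real.tanh (γ + s * w) ^ 3 with hk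
  set k' : ℝ → ℝ := fun w =>
    s * ((1 - Real.tanh (γ + s * w) ^ 2) * (2 - 6 * Real.tanh (γ + s * w) ^ 2)) with hk'
  have hTd : ∀ w, HasDerivAt (fun w => Real.tanh (γ + s * w))
      ((1 - Real.tanh (γ + s * w) ^ 2) * s) w := by
    intro w
    have hinner : HasDerivAt (fun w : ℝ => γ + s * w) s w := by
      simpa using ((hasDerivAt_id w).const_mul s).const_add γ
    exact (hasDerivAt_tanh (γ + s * w)).comp w hinner
  have hkd : ∀ w, HasDerivAt k (k' w) w := by
    intro w
    exact (((hTd w).const_mul 2).sub (((hTd w).pow 3).const_mul 2)).congr_deriv (by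
      simp only [hk']; ring)
  have hkb : ∀ w, |k w| ≤ 4 := fun w => abs_k_le _ (abs_tanh_le_one _)
  have hk'b : ∀ w, |k' w| ≤ s * 8 := by
    intro w
    rw [hk', abs_mul, abs_of_pos hs]
    exact mul_le_mul_of_nonneg_left (abs_k'_le _ (abs_tanh_le_one _)) hs.le
  have hck : Continuous k := by
    simp only [hk]; fun_prop
  have hck' : Continuous k' := by
    simp only [hk']; fun_prop
  have hibp : ∫ w, phi w * (w * k w) = ∫ w, phi w * k' w :=
    gauss_ibp hck' hkd (by norm_num) (by positivity) hkb hk'b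
  -- integrability facts
  have int_phik : Integrable (fun w => phi w * k w) (volume : Measure ℝ) :=
    integrable_phi_mul hck.aestronglyMeasurable
      (a := 4) (b := 0) (by norm_num) le_rfl (fun w => by
        simp only [zero_mul, add_zero]; exact hkb w)
  have int_phiwk : Integrable (fun w => phi w * (w * k w)) (volume : Measure ℝ) := by
    refine integrable_phi_mul (continuous_id.mul hck).aestronglyMeasurable
      (a := 0) (b := 4) le_rfl (by norm_num) (fun w => ?_)
    rw [abs_mul, mul_comm, zero_add]
    exact mul_le_mul_of_nonneg_right (hkb w) (abs_nonneg w)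
  have int_phik' : Integrable (fun w => phi w * k' w) (volume : Measure ℝ) :=
    integrable_phi_mul hck'.aestronglyMeasurable
      (a := s * 8) (b := 0) (by positivity) le_rfl (fun w => by
        simp only [zero_mul, add_zero]; exact hk'b w)
  have hcsq : Continuous (fun w : ℝ => (1 - Real.tanh (γ + s * w) ^ 2) ^ 2) := by fun_prop
  have int_sq : Integrable
      (fun w => phi w * (1 - Real.tanh (γ + s * w) ^ 2) ^ 2) (volume : Measure ℝ) := by
    refine integrable_phi_mul hcsq.aestronglyMeasurable
      (a := 1) (b := 0) (by norm_num) le_rfl (fun w => ?_)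
    have h1 := tanh_sq_le_one (γ + s * w)
    have h0 := sq_nonneg (Real.tanh (γ + s * w))
    rw [abs_of_nonneg (sq_nonneg _)]
    simp only [zero_mul, add_zero]
    nlinarith
  have hcN : Continuous (fun w : ℝ => Real.tanh (γ + s * w)
      * (1 - Real.tanh (γ + s * w)) ^ 2 * (1 + Real.tanh (γ + s * w))) := by fun_prop
  have int_N : Integrable (fun w => phi w * (Real.tanh (γ + s * w)
      * (1 - Real.tanh (γ + s * w)) ^ 2 * (1 + Real.tanh (γ + s * w)))) (volume : Measure ℝ) := by
    refine integrable_phi_mul hcN.aestronglyMeasurable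
      (a := 8) (b := 0) (by norm_num) le_rfl (fun w => ?_)
    simp only [zero_mul, add_zero]
    exact abs_N_le _ (abs_tanh_le_one _)
  -- main chain
  rw [gauss_integral_eq, gauss_integral_eq]
  have step1 : (fun w => phi w * Dfun γ w)
      = fun w => phi w * k w + (2 * s)⁻¹ * (phi w * (w * k w)) := by
    funext w
    simp only [Dfun, hk, ← hsdef]
    have hw : w / (2 * s) = (2 * s)⁻¹ * w := by rw [div_eq_inv_mul]
    rw [hw]; ring
  rw [step1, integral_add int_phik (int_phiwk.const_mul _), integral_const_mul, hibp,
    ← integral_const_mul, ← integral_add int_phik (int_phik'.const_mul _)]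
  have step2 : (fun w => phi w * k w + (2 * s)⁻¹ * (phi w * k' w))
      = fun w => phi w * (1 - Real.tanh (γ + s * w) ^ 2) ^ 2
          + 2 * (phi w * (Real.tanh (γ + s * w) * (1 - Real.tanh (γ + s * w)) ^ 2
            * (1 + Real.tanh (γ + s * w)))) := by
    funext w
    simp only [hk, hk']
    have hss : (2 * s)⁻¹ * s = 2⁻¹ := by
      rw [mul_comm (2 * s)⁻¹ s, ← div_eq_mul_inv, div_eq_iff (ne_of_gt (by positivity : (0:ℝ) < 2 * s))]
      ring
    set t := Real.tanh (γ + s * w)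
    calc phi w * (2 * t - 2 * t ^ 3)
          + (2 * s)⁻¹ * (phi w * (s * ((1 - t ^ 2) * (2 - 6 * t ^ 2))))
        = phi w * (2 * t - 2 * t ^ 3)
          + ((2 * s)⁻¹ * s) * (phi w * ((1 - t ^ 2) * (2 - 6 * t ^ 2))) := by ring
      _ = phi w * (2 * t - 2 * t ^ 3)
          + 2⁻¹ * (phi w * ((1 - t ^ 2) * (2 - 6 * t ^ 2))) := by rw [hss]
      _ = phi w * (1 - t ^ 2) ^ 2 + 2 * (phi w * (t * (1 - t) ^ 2 * (1 + t))) := by ring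
  rw [step2, integral_add int_sq (int_N.const_mul 2), integral_const_mul,
    nishimori γ hγ.le]
  simp

lemma Gfun_lip {a b : ℝ} (ha : 0 < a) (hb : 0 < b) : |Gfun a - Gfun b| ≤ |a - b| := by
  have key := Convex.norm_image_sub_le_of_norm_hasDerivWithin_le (𝕜 := ℝ) (s := Ioi (0:ℝ))
    (f := Gfun) (C := 1)
    (f' := fun x => ∫ w, (1 - Real.tanh (x + Real.sqrt x * w) ^ 2) ^ 2 ∂(gaussianReal 0 1))
    (fun x hx => by
      have h := hasDerivAt_Gfun (mem_Ioi.mp hx)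
      rw [Dfun_integral_eq (mem_Ioi.mp hx)] at h
      exact h.hasDerivWithinAt)
    (fun x hx => by
      rw [Real.norm_eq_abs, abs_le]
      have hint : Integrable
          (fun w => (1 - Real.tanh (x + Real.sqrt x * w) ^ 2) ^ 2) (gaussianReal 0 1) := by
        rw [gauss_integrable_iff]
        have hc : Continuous (fun w : ℝ => (1 - Real.tanh (x + Real.sqrt x * w) ^ 2) ^ 2) := by
          fun_prop
        refine integrable_phi_mul hc.aestronglyMeasurable
          (a := 1) (b := 0) (by norm_num) le_rfl (fun w => ?_)
        have h1 := tanh_sq_le_one (x + Real.sqrt x * w)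
        have h0 := sq_nonneg (Real.tanh (x + Real.sqrt x * w))
        rw [abs_of_nonneg (sq_nonneg _)]
        simp only [zero_mul, add_zero]
        nlinarith
      constructor
      · have := integral_nonneg (μ := gaussianReal 0 1)
          (f := fun w => (1 - Real.tanh (x + Real.sqrt x * w) ^ 2) ^ 2)
          (fun w => sq_nonneg _)
        linarith
      · calc ∫ w, (1 - Real.tanh (x + Real.sqrt x * w) ^ 2) ^ 2 ∂(gaussianReal 0 1)
            ≤ ∫ _, (1:ℝ) ∂(gaussianReal 0 1) := by
              refine integral_mono hint (integrable_const 1) (fun w => ?_)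
              have h1 := tanh_sq_le_one (x + Real.sqrt x * w)
              have h0 := sq_nonneg (Real.tanh (x + Real.sqrt x * w))
              nlinarith
          _ = 1 := by simp)
    (convex_Ioi 0) (mem_Ioi.mpr hb) (mem_Ioi.mpr ha)
  rw [Real.norm_eq_abs, Real.norm_eq_abs, one_mul] at key
  exact key

end Stmt9Aux

open Stmt9Aux

/-- Lipschitz continuity in `t` of the fixed point `γ*(β,t)` of
`γ ↦ β²(1 - mmse(γ + t))`: `|γ*(β,t₁) - γ*(β,t₂)| ≤ (β²/(1-β²)) |t₁ - t₂|`. -/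
theorem stmt9 (β t₁ t₂ γ₁ γ₂ : ℝ) (hβ : β ∈ Ioo (0 : ℝ) 1)
    (ht₁ : 0 < t₁) (ht₂ : 0 < t₂)
    (hγ₁0 : 0 ≤ γ₁) (hγ₁ : γ₁ = β ^ 2 * (1 - mmseFn (γ₁ + t₁)))
    (hγ₂0 : 0 ≤ γ₂) (hγ₂ : γ₂ = β ^ 2 * (1 - mmseFn (γ₂ + t₂))) :
    |γ₁ - γ₂| ≤ β ^ 2 / (1 - β ^ 2) * |t₁ - t₂| := by
  obtain ⟨hβ0, hβ1⟩ := hβ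
  have h1mb : 0 < 1 - β ^ 2 := by nlinarith
  have hmm : ∀ x : ℝ, 1 - mmseFn x = Gfun x := by
    intro x; simp [mmseFn, Gfun]
  rw [hmm] at hγ₁ hγ₂
  have hEq : γ₁ - γ₂ = β ^ 2 * (Gfun (γ₁ + t₁) - Gfun (γ₂ + t₂)) := by
    conv_lhs => rw [hγ₁, hγ₂]
    ring
  have hA : 0 < γ₁ + t₁ := by linarith
  have hB : 0 < γ₂ + t₂ := by linarith
  have habs : |γ₁ - γ₂| ≤ β ^ 2 * (|γ₁ - γ₂| + |t₁ - t₂|) := by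
    calc |γ₁ - γ₂| = β ^ 2 * |Gfun (γ₁ + t₁) - Gfun (γ₂ + t₂)| := by
          rw [hEq, abs_mul, abs_of_nonneg (sq_nonneg β)]
      _ ≤ β ^ 2 * |(γ₁ + t₁) - (γ₂ + t₂)| :=
          mul_le_mul_of_nonneg_left (Gfun_lip hA hB) (sq_nonneg β)
      _ ≤ β ^ 2 * (|γ₁ - γ₂| + |t₁ - t₂|) := by
          refine mul_le_mul_of_nonneg_left ?_ (sq_nonneg β)
          calc |(γ₁ + t₁) - (γ₂ + t₂)| = |(γ₁ - γ₂) + (t₁ - t₂)| := by ring_nf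
            _ ≤ |γ₁ - γ₂| + |t₁ - t₂| := abs_add_le _ _
  rw [div_mul_eq_mul_div, le_div_iff₀ h1mb]
  nlinarith [habs, abs_nonneg (t₁ - t₂), abs_nonneg (γ₁ - γ₂)]
end

section
/- Fix β ∈ (0,1) and T > 0. There exist constants 0 < c(β,T) ≤ C(β,T) < ∞ such that for all t ∈ (0,T], c(β,T) ≤ γ*(β,t)/t ≤ C(β,T), where γ*(β,t) is the unique nonnegative fixed point of γ = β²(1 - mmse(γ + t)). -/
open MeasureTheory ProbabilityTheory Set Filter

private lemma mono_aux {f f' : ℝ → ℝ} (hd : ∀ x, HasDerivAt f (f' x) x)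
    (h0 : ∀ x, 0 ≤ x → 0 ≤ f' x) {y : ℝ} (hy : 0 ≤ y) : f 0 ≤ f y := by
  have hmono : MonotoneOn f (Ici 0) := by
    refine monotoneOn_of_deriv_nonneg (convex_Ici 0) ?_ ?_ ?_
    · exact fun x _ => (hd x).differentiableAt.continuousAt.continuousWithinAt
    · exact fun x _ => (hd x).differentiableAt.differentiableWithinAt
    · intro x hx
      rw [(hd x).deriv]
      refine h0 x ?_
      simp only [interior_Ici, mem_Ioi] at hx
      exact hx.le
  exact hmono self_mem_Ici hy hy

private lemma tanh_sq_eq (y : ℝ) : Real.tanh y ^ 2 = 1 - (Real.cosh y ^ 2)⁻¹ := by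
  have hc := Real.cosh_pos y
  have hs := Real.cosh_sq_sub_sinh_sq y
  rw [Real.tanh_eq_sinh_div_cosh, div_pow]
  field_simp
  linarith

private lemma tanh_sq_le (y : ℝ) : Real.tanh y ^ 2 ≤ 1 - Real.exp (-y ^ 2) := by
  have hc := Real.cosh_pos y
  have h2 : Real.cosh y ^ 2 ≤ Real.exp (y ^ 2) := by
    have h := Real.cosh_le_exp_half_sq y
    have := pow_le_pow_left₀ hc.le h 2
    calc Real.cosh y ^ 2 ≤ Real.exp (y ^ 2 / 2) ^ 2 := this
      _ = Real.exp (y ^ 2) := by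
          rw [sq, ← Real.exp_add]; ring_nf
  have h3 : Real.exp (-y ^ 2) ≤ (Real.cosh y ^ 2)⁻¹ := by
    rw [Real.exp_neg]
    exact inv_anti₀ (by positivity) h2
  rw [tanh_sq_eq]
  linarith

private lemma self_le_sinh {y : ℝ} (hy : 0 ≤ y) : y ≤ Real.sinh y := by
  have h := mono_aux (f := fun x => Real.sinh x - x) (f' := fun x => Real.cosh x - 1)
      (fun x => (Real.hasDerivAt_sinh x).sub (hasDerivAt_id x))
      (fun x _ => by show (0:ℝ) ≤ Real.cosh x - 1; linarith [Real.one_le_cosh x]) hy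
  simpa using h

private lemma tanh_sq_ge (y : ℝ) : (1 - Real.exp (-y ^ 2)) / 2 ≤ Real.tanh y ^ 2 := by
  have hc := Real.cosh_pos y
  have hsq : y ^ 2 ≤ Real.sinh y ^ 2 := by
    rcases le_total 0 y with h | h
    · nlinarith [self_le_sinh h]
    · have h' := self_le_sinh (neg_nonneg.mpr h)
      rw [Real.sinh_neg] at h'
      nlinarith
  have hc2 : 1 + y ^ 2 ≤ Real.cosh y ^ 2 := by
    have := Real.cosh_sq_sub_sinh_sq y
    nlinarith
  have hE : Real.exp (-y ^ 2) ≤ 1 := Real.exp_le_one_iff.mpr (neg_nonpos.mpr (sq_nonneg y))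
  have hE0 : 0 < Real.exp (-y ^ 2) := Real.exp_pos _
  have key : 2 ≤ Real.cosh y ^ 2 * (1 + Real.exp (-y ^ 2)) := by
    rcases le_total (y ^ 2) 1 with h | h
    · have hE1 : 1 - y ^ 2 ≤ Real.exp (-y ^ 2) := by
        have := Real.add_one_le_exp (-y ^ 2)
        linarith
      nlinarith
    · nlinarith
  have hinv : (Real.cosh y ^ 2)⁻¹ ≤ (1 + Real.exp (-y ^ 2)) / 2 := by
    rw [inv_le_iff_one_le_mul₀ (by positivity)]
    nlinarith
  rw [tanh_sq_eq]
  linarith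

private lemma tanh_sq_le_one (y : ℝ) : Real.tanh y ^ 2 ≤ 1 := by
  have := tanh_sq_le y
  have := Real.exp_pos (-y ^ 2)
  linarith

private lemma continuous_tanh' : Continuous Real.tanh := by
  rw [show Real.tanh = fun x => Real.sinh x / Real.cosh x from
    funext Real.tanh_eq_sinh_div_cosh]
  exact Real.continuous_sinh.div Real.continuous_cosh fun x => (Real.cosh_pos x).ne'

private lemma gauss_exp_int {γ : ℝ} (hγ : 0 ≤ γ) :
    ∫ w, Real.exp (-(γ + Real.sqrt γ * w) ^ 2) ∂(gaussianReal 0 1)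
      = Real.exp (-(γ ^ 2 / (1 + 2 * γ))) / Real.sqrt (1 + 2 * γ) := by
  obtain ⟨s, hs0, rfl⟩ : ∃ s, 0 ≤ s ∧ s ^ 2 = γ :=
    ⟨Real.sqrt γ, Real.sqrt_nonneg γ, Real.sq_sqrt hγ⟩
  rw [Real.sqrt_sq hs0]
  have hb : (0:ℝ) < s ^ 2 + 1 / 2 := by positivity
  have hb2 : (0:ℝ) < 1 + 2 * s ^ 2 := by positivity
  rw [gaussianReal_of_var_ne_zero 0 one_ne_zero]
  have h1 : (volume.withDensity (gaussianPDF 0 1))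
      = volume.withDensity (fun x => ((Real.toNNReal (gaussianPDFReal 0 1 x) : NNReal) : ENNReal)) :=
    rfl
  rw [h1, integral_withDensity_eq_integral_smul ((measurable_gaussianPDFReal 0 1).real_toNNReal)]
  have key : ∀ x : ℝ, (Real.toNNReal (gaussianPDFReal 0 1 x) : NNReal)
        • Real.exp (-(s ^ 2 + s * x) ^ 2)
      = (Real.sqrt (2 * Real.pi))⁻¹ * Real.exp (-((s ^ 2) ^ 2 / (1 + 2 * s ^ 2)))
        * Real.exp (-(s ^ 2 + 1 / 2) * (x + s ^ 3 / (s ^ 2 + 1 / 2)) ^ 2) := by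
    intro x
    rw [NNReal.smul_def, Real.coe_toNNReal _ (gaussianPDFReal_nonneg 0 1 x), smul_eq_mul]
    simp only [gaussianPDFReal, NNReal.coe_one, mul_one, sub_zero]
    rw [mul_assoc, mul_assoc, ← Real.exp_add, ← Real.exp_add]
    congr 1
    congr 1
    field_simp
    ring
  simp_rw [key]
  rw [integral_const_mul]
  rw [MeasureTheory.integral_add_right_eq_self
    (fun y => Real.exp (-(s ^ 2 + 1 / 2) * y ^ 2)) (s ^ 3 / (s ^ 2 + 1 / 2))]
  rw [integral_gaussian]
  rw [show Real.pi / (s ^ 2 + 1 / 2) = 2 * Real.pi / (1 + 2 * s ^ 2) by field_simp; ring]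
  rw [Real.sqrt_div (by positivity : (0:ℝ) ≤ 2 * Real.pi)]
  have h2π : (0:ℝ) < Real.sqrt (2 * Real.pi) := Real.sqrt_pos.mpr (by positivity)
  have h12 : (0:ℝ) < Real.sqrt (1 + 2 * s ^ 2) := Real.sqrt_pos.mpr hb2
  field_simp

private lemma phi_bounds {γ : ℝ} (hγ : 0 ≤ γ) :
    (1 - Real.exp (-(γ ^ 2 / (1 + 2 * γ))) / Real.sqrt (1 + 2 * γ)) / 2
      ≤ (∫ w, Real.tanh (γ + Real.sqrt γ * w) ^ 2 ∂(gaussianReal 0 1)) ∧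
    (∫ w, Real.tanh (γ + Real.sqrt γ * w) ^ 2 ∂(gaussianReal 0 1))
      ≤ 1 - Real.exp (-(γ ^ 2 / (1 + 2 * γ))) / Real.sqrt (1 + 2 * γ) := by
  have hcont : Continuous fun w : ℝ => Real.tanh (γ + Real.sqrt γ * w) ^ 2 :=
    (continuous_tanh'.comp (continuous_const.add (continuous_const.mul continuous_id))).pow 2
  have hconte : Continuous fun w : ℝ => Real.exp (-(γ + Real.sqrt γ * w) ^ 2) :=
    Real.continuous_exp.comp
      (((continuous_const.add (continuous_const.mul continuous_id)).pow 2).neg)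
  have hint1 : Integrable (fun w => Real.tanh (γ + Real.sqrt γ * w) ^ 2) (gaussianReal 0 1) := by
    refine Integrable.mono' (integrable_const 1) hcont.aestronglyMeasurable ?_
    filter_upwards with w
    rw [Real.norm_eq_abs, abs_of_nonneg (sq_nonneg _)]
    exact tanh_sq_le_one _
  have hint2 : Integrable (fun w => Real.exp (-(γ + Real.sqrt γ * w) ^ 2)) (gaussianReal 0 1) := by
    refine Integrable.mono' (integrable_const 1) hconte.aestronglyMeasurable ?_
    filter_upwards with w
    rw [Real.norm_eq_abs, abs_of_nonneg (Real.exp_pos _).le]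
    exact Real.exp_le_one_iff.mpr (neg_nonpos.mpr (sq_nonneg _))
  constructor
  · have hmono : ∫ w, (1 - Real.exp (-(γ + Real.sqrt γ * w) ^ 2)) / 2 ∂(gaussianReal 0 1)
        ≤ ∫ w, Real.tanh (γ + Real.sqrt γ * w) ^ 2 ∂(gaussianReal 0 1) := by
      refine integral_mono (((integrable_const 1).sub hint2).div_const 2) hint1 fun w => ?_
      exact tanh_sq_ge _
    calc (1 - Real.exp (-(γ ^ 2 / (1 + 2 * γ))) / Real.sqrt (1 + 2 * γ)) / 2
        = ∫ w, (1 - Real.exp (-(γ + Real.sqrt γ * w) ^ 2)) / 2 ∂(gaussianReal 0 1) := by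
          rw [integral_div, integral_sub (integrable_const 1) hint2, integral_const,
            gauss_exp_int hγ]
          simp
      _ ≤ _ := hmono
  · have hmono : ∫ w, Real.tanh (γ + Real.sqrt γ * w) ^ 2 ∂(gaussianReal 0 1)
        ≤ ∫ w, (1 - Real.exp (-(γ + Real.sqrt γ * w) ^ 2)) ∂(gaussianReal 0 1) :=
      integral_mono hint1 ((integrable_const 1).sub hint2) fun w => tanh_sq_le _
    calc (∫ w, Real.tanh (γ + Real.sqrt γ * w) ^ 2 ∂(gaussianReal 0 1))
        ≤ ∫ w, (1 - Real.exp (-(γ + Real.sqrt γ * w) ^ 2)) ∂(gaussianReal 0 1) := hmono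
      _ = 1 - Real.exp (-(γ ^ 2 / (1 + 2 * γ))) / Real.sqrt (1 + 2 * γ) := by
          rw [integral_sub (integrable_const 1) hint2, integral_const, gauss_exp_int hγ]
          simp

private lemma A_upper {g : ℝ} (hg : 0 ≤ g) (hg1 : g ≤ 1) :
    1 - Real.exp (-(g ^ 2 / (1 + 2 * g))) / Real.sqrt (1 + 2 * g) ≤ g := by
  have hb2 : (0:ℝ) < 1 + 2 * g := by linarith
  have hS0 : (0:ℝ) < Real.sqrt (1 + 2 * g) := Real.sqrt_pos.mpr hb2
  have hS : Real.sqrt (1 + 2 * g) ^ 2 = 1 + 2 * g := Real.sq_sqrt hb2.le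
  have hE : 1 - g ^ 2 / (1 + 2 * g) ≤ Real.exp (-(g ^ 2 / (1 + 2 * g))) := by
    have := Real.add_one_le_exp (-(g ^ 2 / (1 + 2 * g)))
    linarith
  have hr : 0 ≤ 1 - g ^ 2 / (1 + 2 * g) := by
    rw [sub_nonneg, div_le_one hb2]
    nlinarith
  have h2 : Real.sqrt (1 + 2 * g) * (1 - g) ≤ 1 - g ^ 2 / (1 + 2 * g) := by
    have hsq : (Real.sqrt (1 + 2 * g) * (1 - g)) ^ 2 ≤ (1 - g ^ 2 / (1 + 2 * g)) ^ 2 := by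
      rw [mul_pow, hS]
      rw [show (1:ℝ) - g ^ 2 / (1 + 2 * g) = (1 + 2 * g - g ^ 2) / (1 + 2 * g) by
        field_simp]
      rw [div_pow, le_div_iff₀ (by positivity)]
      nlinarith [hg, hg1, sq_nonneg g, mul_nonneg hg hg,
        mul_nonneg (mul_nonneg hg hg) hg,
        mul_nonneg (mul_nonneg (mul_nonneg (mul_nonneg hg hg) hg) hg) (sub_nonneg.mpr hg1),
        mul_nonneg (mul_nonneg (mul_nonneg hg hg) hg)
          (mul_nonneg (sub_nonneg.mpr hg1) (by linarith : (0:ℝ) ≤ 1 + g))]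
    nlinarith [mul_nonneg hS0.le (sub_nonneg.mpr hg1)]
  have h3 : Real.sqrt (1 + 2 * g) * (1 - g) ≤ Real.exp (-(g ^ 2 / (1 + 2 * g))) :=
    le_trans h2 hE
  rw [sub_le_iff_le_add, ← sub_le_iff_le_add']
  rw [le_div_iff₀ hS0]
  linarith [h3]

private lemma A_lower {g : ℝ} (hg : 0 ≤ g) :
    (1 / 4) * min g 1 ≤ 1 - Real.exp (-(g ^ 2 / (1 + 2 * g))) / Real.sqrt (1 + 2 * g) := by
  have hb2 : (0:ℝ) < 1 + 2 * g := by linarith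
  have hS0 : (0:ℝ) < Real.sqrt (1 + 2 * g) := Real.sqrt_pos.mpr hb2
  have hS : Real.sqrt (1 + 2 * g) ^ 2 = 1 + 2 * g := Real.sq_sqrt hb2.le
  have hE1 : Real.exp (-(g ^ 2 / (1 + 2 * g))) ≤ 1 := by
    refine Real.exp_le_one_iff.mpr (neg_nonpos.mpr ?_)
    positivity
  have hEdiv : Real.exp (-(g ^ 2 / (1 + 2 * g))) / Real.sqrt (1 + 2 * g)
      ≤ 1 / Real.sqrt (1 + 2 * g) := by
    gcongr
  suffices h : 1 / Real.sqrt (1 + 2 * g) ≤ 1 - (1 / 4) * min g 1 by linarith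
  rcases le_total g 1 with h1 | h1
  · rw [min_eq_left h1]
    have hpos : (0:ℝ) < 1 - (1 / 4) * g := by linarith
    rw [div_le_iff₀ hS0]
    have hkey : 1 ≤ (Real.sqrt (1 + 2 * g) * (1 - (1 / 4) * g)) := by
      have hsq : (1:ℝ) ≤ (Real.sqrt (1 + 2 * g) * (1 - (1 / 4) * g)) ^ 2 := by
        rw [mul_pow, hS]
        nlinarith [hg, h1]
      nlinarith [mul_nonneg hS0.le hpos.le]
    linarith [hkey]
  · rw [min_eq_right h1]
    have h43 : (4:ℝ) / 3 ≤ Real.sqrt (1 + 2 * g) := by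
      have : ((4:ℝ) / 3) ^ 2 ≤ 1 + 2 * g := by nlinarith
      nlinarith [hS, hS0]
    rw [div_le_iff₀ hS0]
    nlinarith [h43]

/-- For `β ∈ (0,1)` and `T > 0` there are constants `0 < c ≤ C < ∞` such that the fixed
point `γ*(β,t)` of `γ ↦ β²(1-mmse(γ+t))` satisfies `c ≤ γ*(β,t)/t ≤ C` on `(0,T]`. -/
theorem stmt10 (β T : ℝ) (hβ : β ∈ Ioo (0 : ℝ) 1) (hT : 0 < T) :
    ∃ c C : ℝ, 0 < c ∧ c ≤ C ∧
      ∀ t ∈ Ioc (0 : ℝ) T, ∀ γs : ℝ,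
        0 ≤ γs → γs = β ^ 2 * (1 - mmseFn (γs + t)) →
        c ≤ γs / t ∧ γs / t ≤ C := by
  obtain ⟨hβ0, hβ1⟩ := hβ
  have hβ2 : 0 < β ^ 2 := by positivity
  have hβ2lt : β ^ 2 < 1 := by nlinarith
  refine ⟨β ^ 2 / (8 * max T 1), 1 / (1 - β ^ 2), by positivity, ?_, ?_⟩
  · have h1 : β ^ 2 / (8 * max T 1) ≤ 1 := by
      rw [div_le_one (by positivity)]
      have : (1:ℝ) ≤ max T 1 := le_max_right T 1
      nlinarith
    have h2 : (1:ℝ) ≤ 1 / (1 - β ^ 2) := by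
      rw [le_div_iff₀ (by linarith)]
      nlinarith
    linarith
  intro t ht γs hγs heq
  obtain ⟨ht0, htT⟩ := ht
  set g := γs + t with hgdef
  have hg0 : 0 ≤ g := by positivity
  have hI : γs = β ^ 2 * ∫ w, Real.tanh (g + Real.sqrt g * w) ^ 2 ∂(gaussianReal 0 1) := by
    rw [heq, mmseFn]; ring
  obtain ⟨hlow, hup⟩ := phi_bounds hg0
  set I := ∫ w, Real.tanh (g + Real.sqrt g * w) ^ 2 ∂(gaussianReal 0 1) with hIdef
  set A := Real.exp (-(g ^ 2 / (1 + 2 * g))) / Real.sqrt (1 + 2 * g) with hAdef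
  have hA0 : 0 ≤ A := by positivity
  constructor
  · -- lower bound
    have hM0 : (0:ℝ) < max T 1 := lt_of_lt_of_le one_pos (le_max_right T 1)
    have hM1 : (1:ℝ) ≤ max T 1 := le_max_right T 1
    have hMT : T ≤ max T 1 := le_max_left T 1
    have h1 : (1 / 4) * min g 1 ≤ 1 - A := A_lower hg0
    have h2 : β ^ 2 * ((1 / 8) * min g 1) ≤ γs := by
      rw [hI]
      have h8 : (1 / 8 : ℝ) * min g 1 ≤ I := by linarith
      exact mul_le_mul_of_nonneg_left h8 hβ2.le
    have hming : min t 1 ≤ min g 1 :=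
      min_le_min (by simp only [hgdef]; linarith) le_rfl
    have hmin_t : t / max T 1 ≤ min t 1 := by
      rcases le_total t 1 with h | h
      · rw [min_eq_left h, div_le_iff₀ hM0]
        nlinarith
      · rw [min_eq_right h, div_le_iff₀ hM0]
        have : t ≤ max T 1 := le_trans htT hMT
        linarith
    rw [le_div_iff₀ ht0]
    have hc : β ^ 2 / (8 * max T 1) * t = β ^ 2 * ((1 / 8) * (t / max T 1)) := by
      field_simp
    rw [hc]
    have hchain : (1 / 8 : ℝ) * (t / max T 1) ≤ (1 / 8) * min g 1 := by
      have := le_trans hmin_t hming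
      linarith
    calc β ^ 2 * ((1 / 8) * (t / max T 1)) ≤ β ^ 2 * ((1 / 8) * min g 1) :=
          mul_le_mul_of_nonneg_left hchain hβ2.le
      _ ≤ γs := h2
  · -- upper bound
    have hIg' : I ≤ g := by
      rcases le_total g 1 with h | h
      · have := A_upper hg0 h
        calc I ≤ 1 - A := hup
          _ ≤ g := this
      · calc I ≤ 1 - A := hup
          _ ≤ 1 := by linarith [hA0]
          _ ≤ g := h
    have ht' : t = g - β ^ 2 * I := by
      rw [← hI]; simp only [hgdef]; ring
    have hγsg : γs ≤ g := by simp only [hgdef]; linarith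
    have hkey : (1 - β ^ 2) * γs ≤ t := by
      have hm : β ^ 2 * I ≤ β ^ 2 * g := mul_le_mul_of_nonneg_left hIg' hβ2.le
      rw [ht']
      nlinarith
    rw [div_le_div_iff₀ ht0 (by linarith : (0:ℝ) < 1 - β ^ 2)]
    linarith [hkey]
end
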